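/- arXiv:2510.25734 — 8 statements merged into one kernel-verified Lean document; each statement's English description precedes it below -/
import Mathlib

section
/- Let s,t ≥ 3 with R(s-1,t) ≥ R(s,t-1), and set M = R(s-1,t), m = R(s,t-1). Then for every r ≥ 2, every red/blue edge-coloring of the Kneser graph KG((M+1)r + m - 1, r) contains a red clique of size s or a blue clique of size t; i.e., RKG_r(s,t) ≤ (M+1)r + m - 1. -/
open Finset

/-- A clique in the Kneser graph `KG(n,r)`: a family of pairwise disjoint
`r`-element subsets of `[n] = {0, …, n-1}`. -/
def IsKneserClique (n r : ℕ) (S : Finset (Finset ℕ)) : Prop :=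
  (∀ A ∈ S, A ⊆ Finset.range n ∧ A.card = r) ∧
  (S : Set (Finset ℕ)).Pairwise Disjoint

/-- A clique all of whose edges get color `b` under the edge-coloring `c`. -/
def MonoClique (c : Finset ℕ → Finset ℕ → Bool) (b : Bool) (S : Finset (Finset ℕ)) : Prop :=
  ∀ A ∈ S, ∀ B ∈ S, A ≠ B → c A B = b

/-- `n` is Ramsey for the Kneser graph `KG(n,r)`: every red/blue edge-coloring
contains a red `s`-clique or a blue `t`-clique. -/
def KneserRamseyProp (n r s t : ℕ) : Prop :=
  ∀ c : Finset ℕ → Finset ℕ → Bool, (∀ A B, c A B = c B A) →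
    (∃ S : Finset (Finset ℕ), IsKneserClique n r S ∧ S.card = s ∧ MonoClique c true S) ∨
    (∃ S : Finset (Finset ℕ), IsKneserClique n r S ∧ S.card = t ∧ MonoClique c false S)

/-- The `r`-Kneser Ramsey number `RKG_r(s,t)`. -/
noncomputable def RKG (r s t : ℕ) : ℕ := sInf {n | KneserRamseyProp n r s t}

/-- `n` is Ramsey for `(s,t)`: every red/blue edge-coloring of the complete
graph on `[n]` contains a red `K_s` or a blue `K_t`. -/
def RamseyProp (n s t : ℕ) : Prop :=
  ∀ c : ℕ → ℕ → Bool, (∀ u v, c u v = c v u) →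
    (∃ S : Finset ℕ, S ⊆ Finset.range n ∧ S.card = s ∧
      ∀ u ∈ S, ∀ v ∈ S, u ≠ v → c u v = true) ∨
    (∃ S : Finset ℕ, S ⊆ Finset.range n ∧ S.card = t ∧
      ∀ u ∈ S, ∀ v ∈ S, u ≠ v → c u v = false)

/-- The classical Ramsey number `R(s,t)`. -/
noncomputable def ramseyNumber (s t : ℕ) : ℕ := sInf {n | RamseyProp n s t}

/-!
Let `H = {0, …, r-1}` be the hub. The `r`-sets disjoint from `H` are the `r`-subsets of the
remaining `Mr + m - 1` points, two-coloured by the colour of their edge to `H`. The two-colour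
Alon–Frankl–Lovász theorem, applied after padding with `M - m` fresh points, yields `M` pairwise
disjoint red neighbours or `m` pairwise disjoint blue neighbours of `H`, i.e. a clique of the
Kneser graph. Ramsey's theorem inside it gives, in the first case, a blue `K_t` or a red
`K_{s-1}` that `H` extends; the second case is symmetric, with `R(s, t-1)`.

The Alon–Frankl–Lovász theorem is proved by induction on `k`: if `V` has no monochromatic packing
of size `k+1`, then for every `(r+1)`-set `U ⊆ V` a monochromatic `k`-packing of `V \ U` forces
every `r`-subset of `U` into the opposite colour, and exchanging one element at a time shows that
the colouring is constant on the `r`-subsets of `V`.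
-/

section Ramsey

variable {α : Type*}

/-- `MonoClique` and the monochromatic sets in `RamseyProp` unfold to this predicate. -/
def IsMonochromaticOn (c : α → α → Bool) (b : Bool) (S : Finset α) : Prop :=
  ∀ u ∈ S, ∀ v ∈ S, u ≠ v → c u v = b

theorem IsMonochromaticOn.insert [DecidableEq α] {c : α → α → Bool} {b : Bool} {S : Finset α}
    {x : α} (hc : ∀ u v, c u v = c v u) (hS : IsMonochromaticOn c b S)
    (hx : ∀ u ∈ S, c x u = b) : IsMonochromaticOn c b (insert x S) := by
  intro u hu v hv huv
  rw [mem_insert] at hu hv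
  rcases hu with rfl | hu <;> rcases hv with rfl | hv
  · exact absurd rfl huv
  · exact hx v hv
  · rw [hc]; exact hx u hu
  · exact hS u hu v hv huv

theorem IsMonochromaticOn.image [DecidableEq α] {β : Type*} {c : α → α → Bool} {b : Bool}
    {f : β → α} {S : Finset β} (hS : IsMonochromaticOn (fun u v => c (f u) (f v)) b S) :
    IsMonochromaticOn c b (S.image f) := by
  simp only [IsMonochromaticOn, forall_mem_image]
  exact fun u hu v hv huv => hS u hu v hv (fun h => huv (h ▸ rfl))

theorem Finset.exists_mapsTo_range_injOn {X : Finset α} {n : ℕ} (hX : n ≤ #X) {x₀ : α} :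
    ∃ f : ℕ → α, Set.MapsTo f (range n) X ∧ Set.InjOn f (range n) := by
  refine ⟨fun i => X.toList.getD i x₀, fun i hi => ?_, fun i hi j hj hij => ?_⟩
  · have hi : i < X.toList.length := by simpa using (mem_range.mp hi).trans_le hX
    change X.toList.getD i x₀ ∈ X
    rw [← mem_toList, List.getD_eq_getElem _ _ hi]
    exact X.toList.getElem_mem hi
  · have hi : i < X.toList.length := by simpa using (mem_range.mp hi).trans_le hX
    have hj : j < X.toList.length := by simpa using (mem_range.mp hj).trans_le hX
    simp only [List.getD_eq_getElem _ _ hi, List.getD_eq_getElem _ _ hj] at hij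
    exact (X.nodup_toList.getElem_inj_iff).mp hij

theorem RamseyProp.pos {n s t : ℕ} (h : RamseyProp n s t) (hs : s ≠ 0) (ht : t ≠ 0) : 0 < n := by
  rw [Nat.pos_iff_ne_zero]
  rintro rfl
  rcases h (fun _ _ => true) (fun _ _ => rfl) with ⟨S, hS, rfl, -⟩ | ⟨S, hS, rfl, -⟩ <;>
    simp_all [subset_empty]

theorem RamseyProp.exists_of_le_card [DecidableEq α] {n s t : ℕ} (h : RamseyProp n s t)
    {X : Finset α} (hX : n ≤ #X) (c : α → α → Bool) (hc : ∀ u v, c u v = c v u) :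
    (∃ S ⊆ X, #S = s ∧ IsMonochromaticOn c true S) ∨
      (∃ S ⊆ X, #S = t ∧ IsMonochromaticOn c false S) := by
  rcases X.eq_empty_or_nonempty with rfl | ⟨x₀, -⟩
  · obtain rfl : n = 0 := by simpa using hX
    rcases h (fun _ _ => true) (fun _ _ => rfl) with ⟨S, hS, rfl, -⟩ | ⟨S, hS, rfl, -⟩ <;>
      obtain rfl := subset_empty.mp hS
    · exact Or.inl ⟨∅, subset_rfl, rfl, by simp [IsMonochromaticOn]⟩
    · exact Or.inr ⟨∅, subset_rfl, rfl, by simp [IsMonochromaticOn]⟩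
  obtain ⟨f, hfX, hf⟩ := exists_mapsTo_range_injOn hX (x₀ := x₀)
  have transfer {b : Bool} {S : Finset ℕ} (hS : S ⊆ range n)
      (hmono : IsMonochromaticOn (fun u v => c (f u) (f v)) b S) :
      ∃ S' ⊆ X, #S' = #S ∧ IsMonochromaticOn c b S' :=
    ⟨S.image f, fun _ hx => by obtain ⟨u, hu, rfl⟩ := mem_image.mp hx; exact hfX (hS hu),
      card_image_of_injOn (hf.mono hS), hmono.image⟩
  rcases h _ fun u v => hc (f u) (f v) with ⟨S, hS, rfl, hmono⟩ | ⟨S, hS, rfl, hmono⟩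
  · exact Or.inl (transfer hS hmono)
  · exact Or.inr (transfer hS hmono)

theorem RamseyProp.succ {n₁ n₂ s t : ℕ} (h₁ : RamseyProp n₁ s (t + 1))
    (h₂ : RamseyProp n₂ (s + 1) t) : RamseyProp (n₁ + n₂ + 1) (s + 1) (t + 1) := by
  intro c hc
  set v := n₁ + n₂
  set red := (range v).filter (c v · = true)
  set blue := (range v).filter (c v · = false)
  have hsplit : #red + #blue = v := by
    simpa using card_filter_add_card_filter_not (s := range v) (c v · = true)
  have hred : red ⊆ range (v + 1) := (filter_subset _ _).trans (range_subset_range.mpr v.le_succ)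
  have hblue : blue ⊆ range (v + 1) := (filter_subset _ _).trans (range_subset_range.mpr v.le_succ)
  have hinsert {S : Finset ℕ} (hS : S ⊆ range v) :
      insert v S ⊆ range (v + 1) ∧ #(insert v S) = #S + 1 :=
    ⟨insert_subset (by simp) (hS.trans (range_subset_range.mpr v.le_succ)),
      card_insert_of_notMem fun h => by simpa using hS h⟩
  obtain hR | hB : n₁ ≤ #red ∨ n₂ ≤ #blue := by omega
  · rcases h₁.exists_of_le_card hR c hc with ⟨S, hS, rfl, hmono⟩ | ⟨S, hS, hcard, hmono⟩
    · have := hinsert (hS.trans (filter_subset _ _))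
      exact Or.inl ⟨insert v S, this.1, this.2,
        hmono.insert hc fun u hu => (mem_filter.mp (hS hu)).2⟩
    · exact Or.inr ⟨S, hS.trans hred, hcard, hmono⟩
  · rcases h₂.exists_of_le_card hB c hc with ⟨S, hS, hcard, hmono⟩ | ⟨S, hS, rfl, hmono⟩
    · exact Or.inl ⟨S, hS.trans hblue, hcard, hmono⟩
    · have := hinsert (hS.trans (filter_subset _ _))
      exact Or.inr ⟨insert v S, this.1, this.2,
        hmono.insert hc fun u hu => (mem_filter.mp (hS hu)).2⟩

theorem exists_ramseyProp : ∀ s t : ℕ, ∃ n, RamseyProp n s t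
  | 0, _ => ⟨0, fun _ _ => Or.inl ⟨∅, by simp, by simp, by simp⟩⟩
  | _ + 1, 0 => ⟨0, fun _ _ => Or.inr ⟨∅, by simp, by simp, by simp⟩⟩
  | s + 1, t + 1 =>
    have ⟨_, h₁⟩ := exists_ramseyProp s (t + 1)
    have ⟨_, h₂⟩ := exists_ramseyProp (s + 1) t
    ⟨_, h₁.succ h₂⟩

theorem ramseyProp_ramseyNumber (s t : ℕ) : RamseyProp (ramseyNumber s t) s t :=
  Nat.sInf_mem (exists_ramseyProp s t)

end Ramsey

section Packing

variable {α : Type*} {V : Finset α} {r : ℕ} {T : Finset (Finset α)}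

def IsPacking (V : Finset α) (r : ℕ) (T : Finset (Finset α)) : Prop :=
  T ⊆ V.powersetCard r ∧ (T : Set (Finset α)).Pairwise Disjoint

theorem isKneserClique_iff_isPacking {n : ℕ} {S : Finset (Finset ℕ)} :
    IsKneserClique n r S ↔ IsPacking (range n) r S := by
  simp only [IsKneserClique, IsPacking, subset_iff, mem_powersetCard]

theorem IsPacking.empty : IsPacking V r ∅ := by simp [IsPacking]

theorem IsPacking.subset {T' : Finset (Finset α)} (hT : IsPacking V r T) (hT' : T' ⊆ T) :
    IsPacking V r T' :=
  ⟨hT'.trans hT.1, hT.2.mono (by simpa using hT')⟩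

theorem IsPacking.mono {W : Finset α} (hT : IsPacking V r T) (hVW : V ⊆ W) : IsPacking W r T :=
  ⟨hT.1.trans (powersetCard_mono hVW), hT.2⟩

variable [DecidableEq α]

theorem IsPacking.insert_of_sdiff {A : Finset α} (hT : IsPacking (V \ A) r T) (hAV : A ⊆ V)
    (hA : #A = r) :
    IsPacking V r (insert A T) := by
  refine ⟨insert_subset (mem_powersetCard.mpr ⟨hAV, hA⟩)
    (hT.1.trans (powersetCard_mono sdiff_subset)), ?_⟩
  rw [coe_insert, Set.pairwise_insert_of_symm]
  exact ⟨hT.2, fun B hB _ => (sdiff_disjoint.mono_left (mem_powersetCard.mp (hT.1 hB)).1).symm⟩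

theorem IsPacking.notMem_of_sdiff {A : Finset α} (hT : IsPacking (V \ A) r T) (hA : A.Nonempty) :
    A ∉ T := fun h => by
  obtain ⟨x, hx⟩ := hA
  simpa [hx] using (mem_powersetCard.mp (hT.1 h)).1 hx

theorem IsPacking.card_insert_of_sdiff {A : Finset α} (hT : IsPacking (V \ A) r T) (hr : r ≠ 0)
    (hA : #A = r) :
    #(insert A T) = #T + 1 :=
  card_insert_of_notMem (hT.notMem_of_sdiff (card_pos.mp (by omega)))

theorem exists_isPacking (hr : r ≠ 0) :
    ∀ {k : ℕ} {V : Finset α}, r * k ≤ #V → ∃ T, IsPacking V r T ∧ #T = k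
  | 0, _, _ => ⟨∅, .empty, rfl⟩
  | k + 1, V, hV => by
    obtain ⟨A, hAV, hA⟩ := exists_subset_card_eq (show r ≤ #V by nlinarith)
    obtain ⟨T, hT, rfl⟩ := exists_isPacking hr (k := k) (V := V \ A)
      (by rw [card_sdiff_of_subset hAV, hA]; rw [Nat.mul_succ] at hV; omega)
    exact ⟨insert A T, hT.insert_of_sdiff hAV hA, hT.card_insert_of_sdiff hr hA⟩

end Packing

section AlonFranklLovasz

variable {α : Type*} [DecidableEq α] {V : Finset α} {r : ℕ}

theorem eq_on_powersetCard_of_eq_on_succ {β : Type*} (f : Finset α → β)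
    (h : ∀ U ∈ V.powersetCard (r + 1), ∀ A ∈ U.powersetCard r, ∀ B ∈ U.powersetCard r, f A = f B) :
    ∀ A ∈ V.powersetCard r, ∀ B ∈ V.powersetCard r, f A = f B := by
  intro A hA B hB
  simp only [mem_powersetCard] at h hA hB
  induction hd : #(A \ B) generalizing A with
  | zero =>
    rw [card_eq_zero, sdiff_eq_empty_iff_subset] at hd
    rw [eq_of_subset_of_card_le hd (by omega)]
  | succ d ih =>
    obtain ⟨x, hx⟩ := card_pos.mp (show 0 < #(A \ B) by omega)
    obtain ⟨y, hy⟩ := card_pos.mp (show 0 < #(B \ A) by rw [← card_sdiff_comm (by omega)]; omega)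
    rw [mem_sdiff] at hx hy
    have hyA : #(insert y A) = r + 1 := by rw [card_insert_of_notMem hy.2, hA.2]
    have hA' : #(insert y (A.erase x)) = r := by
      rw [card_insert_of_notMem fun h => hy.2 (mem_of_mem_erase h), card_erase_of_mem hx.1,
        Nat.sub_add_cancel (card_pos.mpr ⟨x, hx.1⟩), hA.2]
    calc f A = f (insert y (A.erase x)) :=
          h _ ⟨insert_subset (hB.1 hy.1) hA.1, hyA⟩ A ⟨subset_insert _ _, hA.2⟩ _
            ⟨insert_subset_insert _ (erase_subset _ _), hA'⟩
      _ = f B := by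
        refine ih _ ⟨insert_subset (hB.1 hy.1) ((erase_subset _ _).trans hA.1), hA'⟩ ?_
        rw [insert_sdiff_of_mem _ hy.1, erase_sdiff_comm, card_erase_of_mem (mem_sdiff.mpr hx), hd]
        rfl

theorem exists_isPacking_monochromatic (hr : r ≠ 0) (f : Finset α → Bool) :
    ∀ {k : ℕ} {V : Finset α}, (r + 1) * k - 1 ≤ #V →
      ∃ T, IsPacking V r T ∧ #T = k ∧ ∃ b, ∀ A ∈ T, f A = b
  | 0, _, _ => ⟨∅, .empty, rfl, true, by simp⟩
  | k + 1, V, hV => by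
    by_contra hne
    have hsucc : (r + 1) * (k + 1) = (r + 1) * k + r + 1 := by ring
    have hU : ∀ U ∈ V.powersetCard (r + 1),
        ∀ A ∈ U.powersetCard r, ∀ B ∈ U.powersetCard r, f A = f B := by
      intro U hU
      rw [mem_powersetCard] at hU
      obtain ⟨T, hT, hTk, b, hb⟩ := exists_isPacking_monochromatic hr f (k := k) (V := V \ U)
        (by rw [card_sdiff_of_subset hU.1, hU.2]; omega)
      have hnot : ∀ A ∈ U.powersetCard r, f A ≠ b := by
        intro A hA hfA
        rw [mem_powersetCard] at hA
        have hT' := hT.mono (sdiff_subset_sdiff subset_rfl hA.1)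
        refine hne ⟨insert A T, hT'.insert_of_sdiff (hA.1.trans hU.1) hA.2, ?_, b, ?_⟩
        · rw [hT'.card_insert_of_sdiff hr hA.2, hTk]
        · simpa [hfA] using hb
      intro A hA B hB
      have hA := Bool.eq_not_iff.mpr (hnot A hA)
      have hB := Bool.eq_not_iff.mpr (hnot B hB)
      rw [hA, hB]
    have hconst := eq_on_powersetCard_of_eq_on_succ f hU
    obtain ⟨T, hT, hTk⟩ := exists_isPacking hr (k := k + 1) (V := V) (by
      have : (r + 1) * (k + 1) = r * (k + 1) + k + 1 := by ring
      omega)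
    obtain ⟨A₀, hA₀⟩ := card_pos.mp (show 0 < #T by omega)
    exact hne ⟨T, hT, hTk, f A₀, fun A hA => hconst A (hT.1 hA) A₀ (hT.1 hA₀)⟩

theorem exists_isPacking_true_or_false [Infinite α] (hr : r ≠ 0) (f : Finset α → Bool) {k l : ℕ}
    (hlk : l ≤ k) (hV : k * r + l - 1 ≤ #V) :
    (∃ T, IsPacking V r T ∧ #T = k ∧ ∀ A ∈ T, f A = true) ∨
      (∃ T, IsPacking V r T ∧ #T = l ∧ ∀ A ∈ T, f A = false) := by
  -- Pad `V` with `k - l` fresh points and colour `false` every set meeting them; a packing has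
  -- at most `k - l` such members.
  obtain ⟨W, hVW, hW⟩ := Infinite.exists_superset_card_eq V (#V + (k - l)) le_self_add
  obtain ⟨T, hT, hTk, b, hb⟩ := exists_isPacking_monochromatic hr
    (fun A => decide (A ⊆ V) && f A) (k := k) (V := W)
    (by have : (r + 1) * k = k * r + k := by ring
        omega)
  cases b
  · set T₁ := T.filter (· ⊆ V)
    have hmeet : #(T \ T₁) ≤ #(W \ V) := by
      refine card_le_card_of_forall_subsingleton (fun A x => x ∈ A) (fun A hA => ?_)
        (fun x _ A hA B hB => ?_)
      · simp only [T₁, mem_sdiff, mem_filter, not_and] at hA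
        obtain ⟨x, hxA, hxV⟩ := not_subset.mp (hA.2 hA.1)
        exact ⟨x, mem_sdiff.mpr ⟨(mem_powersetCard.mp (hT.1 hA.1)).1 hxA, hxV⟩, hxA⟩
      · simp only [Set.mem_ofPred_eq, mem_sdiff] at hA hB
        by_contra hAB
        exact disjoint_left.mp (hT.2 hA.1.1 hB.1.1 hAB) hA.2 hB.2
    have hT₁ : l ≤ #T₁ := by
      have := card_sdiff_of_subset (show T₁ ⊆ T from filter_subset _ _)
      rw [card_sdiff_of_subset hVW] at hmeet
      omega
    obtain ⟨T₂, hT₂, rfl⟩ := exists_subset_card_eq hT₁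
    refine Or.inr ⟨T₂, ⟨fun A hA => ?_, hT.2.mono (by simpa using hT₂.trans (filter_subset _ _))⟩,
      rfl, fun A hA => ?_⟩
    · have hA := mem_filter.mp (hT₂ hA)
      exact mem_powersetCard.mpr ⟨hA.2, (mem_powersetCard.mp (hT.1 hA.1)).2⟩
    · have hA := mem_filter.mp (hT₂ hA)
      simpa [hA.2] using hb A hA.1
  · have hTV : ∀ A ∈ T, A ⊆ V ∧ f A = true := fun A hA => by simpa using hb A hA
    exact Or.inl ⟨T, ⟨fun A hA => mem_powersetCard.mpr
      ⟨(hTV A hA).1, (mem_powersetCard.mp (hT.1 hA)).2⟩, hT.2⟩, hTk, fun A hA => (hTV A hA).2⟩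

end AlonFranklLovasz

theorem kneserRamseyProp_of_ramseyProp {r M m a b : ℕ} (hr : r ≠ 0) (hm : 0 < m) (hmM : m ≤ M)
    (hM : RamseyProp M a (b + 1)) (hm' : RamseyProp m (a + 1) b) :
    KneserRamseyProp ((M + 1) * r + m - 1) r (a + 1) (b + 1) := by
  intro c hc
  set N := (M + 1) * r + m - 1
  set hub := range r
  have hsucc : (M + 1) * r = M * r + r := by ring
  have hhub : hub ⊆ range N := range_subset_range.mpr (by omega)
  have hV : M * r + m - 1 ≤ #(range N \ hub) := by
    rw [card_sdiff_of_subset hhub, card_range, card_range]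
    omega
  have extend {b' : Bool} {S : Finset (Finset ℕ)} (hS : IsPacking (range N \ hub) r S)
      (hcol : ∀ A ∈ S, c hub A = b') (hmono : IsMonochromaticOn c b' S) :
      IsKneserClique N r (insert hub S) ∧ #(insert hub S) = #S + 1 ∧
        MonoClique c b' (insert hub S) :=
    ⟨isKneserClique_iff_isPacking.mpr (hS.insert_of_sdiff hhub (card_range r)),
      hS.card_insert_of_sdiff hr (card_range r), hmono.insert hc hcol⟩
  have clique {S : Finset (Finset ℕ)} (hS : IsPacking (range N \ hub) r S) : IsKneserClique N r S :=
    isKneserClique_iff_isPacking.mpr (hS.mono sdiff_subset)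
  rcases exists_isPacking_true_or_false hr (c hub) hmM hV with
    ⟨T, hT, hTM, hred⟩ | ⟨T, hT, hTm, hblue⟩
  · rcases hM.exists_of_le_card hTM.ge c hc with ⟨S, hST, hS, hSred⟩ | ⟨S, hST, hS, hSblue⟩
    · obtain ⟨hK, hcard, hmono⟩ := extend (hT.subset hST) (fun A hA => hred A (hST hA)) hSred
      exact Or.inl ⟨_, hK, by rw [hcard, hS], hmono⟩
    · exact Or.inr ⟨S, clique (hT.subset hST), hS, hSblue⟩
  · rcases hm'.exists_of_le_card hTm.ge c hc with ⟨S, hST, hS, hSred⟩ | ⟨S, hST, hS, hSblue⟩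
    · exact Or.inl ⟨S, clique (hT.subset hST), hS, hSred⟩
    · obtain ⟨hK, hcard, hmono⟩ := extend (hT.subset hST) (fun A hA => hblue A (hST hA)) hSblue
      exact Or.inr ⟨_, hK, by rw [hcard, hS], hmono⟩

theorem rkg_le_general (r s t : ℕ) (hr : 2 ≤ r) (hs : 3 ≤ s) (ht : 3 ≤ t)
    (hMm : ramseyNumber s (t - 1) ≤ ramseyNumber (s - 1) t) :
    RKG r s t ≤ (ramseyNumber (s - 1) t + 1) * r + ramseyNumber s (t - 1) - 1 := by
  obtain ⟨a, rfl⟩ : ∃ a, s = a + 1 := ⟨s - 1, by omega⟩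
  obtain ⟨b, rfl⟩ : ∃ b, t = b + 1 := ⟨t - 1, by omega⟩
  simp only [Nat.add_sub_cancel] at hMm ⊢
  exact Nat.sInf_le (kneserRamseyProp_of_ramseyProp (by omega)
    ((ramseyProp_ramseyNumber _ _).pos (by omega) (by omega)) hMm
    (ramseyProp_ramseyNumber _ _) (ramseyProp_ramseyNumber _ _))
end

section
/- For every s ≥ 3 and r ≥ 2, RKG_r(s,s) ≤ (R(s,s-1) + 1)·r + R(s,s-1) - 1; i.e., every red/blue edge-coloring of KG((R(s,s-1)+1)r + R(s,s-1) - 1, r) contains a monochromatic clique of size s. -/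
open Finset

/-! Fix an `r`-set `A₀` and colour each `r`-subset `A` of the remaining `(r + 1) m - 1` points,
`m = R(s, s - 1)`, by the colour of the edge `A₀A`. The two-colour case of Alon–Frankl–Lovász
yields `m` pairwise disjoint `r`-sets all joined to `A₀` in one colour `b`; it has an elementary
proof: if the colouring is not constant, some two `r`-sets of different colours have a union of
only `r + 1` points, which can be removed before recursing. Ramsey's theorem on those `m` sets
gives either an `s`-clique avoiding colour `b`, or an `(s - 1)`-clique of colour `b` that `A₀`
extends to an `s`-clique of colour `b`. -/

variable {α : Type*}

def IsUniformMatching (V : Finset α) (r : ℕ) (M : Finset (Finset α)) : Prop :=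
  (∀ A ∈ M, A ⊆ V ∧ #A = r) ∧ (M : Set (Finset α)).Pairwise Disjoint

namespace IsUniformMatching

variable {V W U Z : Finset α} {r : ℕ} {M N : Finset (Finset α)}

theorem mono (hM : IsUniformMatching V r M) (hVW : V ⊆ W) : IsUniformMatching W r M :=
  ⟨fun A hA => ⟨(hM.1 A hA).1.trans hVW, (hM.1 A hA).2⟩, hM.2⟩

theorem subset (hM : IsUniformMatching V r M) (hNM : N ⊆ M) : IsUniformMatching V r N :=
  ⟨fun A hA => hM.1 A (hNM hA), hM.2.mono (coe_subset.2 hNM)⟩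

variable [DecidableEq α]

protected theorem insert (hM : IsUniformMatching (V \ U) r M) (hZU : Z ⊆ U) (hZV : Z ⊆ V)
    (hZ : #Z = r) : IsUniformMatching V r (insert Z M) := by
  have hdisj : ∀ A ∈ M, Disjoint Z A := fun A hA => disjoint_sdiff.mono hZU (hM.1 A hA).1
  refine ⟨?_, ?_⟩
  · simp only [mem_insert, forall_eq_or_imp]
    exact ⟨⟨hZV, hZ⟩, fun A hA => ⟨(hM.1 A hA).1.trans sdiff_subset, (hM.1 A hA).2⟩⟩
  · rw [coe_insert]
    exact hM.2.insert fun A hA _ => ⟨hdisj A hA, (hdisj A hA).symm⟩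

theorem card_insert (hM : IsUniformMatching (V \ U) r M) (hZU : Z ⊆ U) (hZ : Z.Nonempty) :
    #(insert Z M) = #M + 1 := by
  refine card_insert_of_notMem fun hZM => ?_
  obtain ⟨x, hx⟩ := hZ
  exact (mem_sdiff.1 ((hM.1 Z hZM).1 hx)).2 (hZU hx)

end IsUniformMatching

section UniformMatching

variable [DecidableEq α] {r : ℕ}

theorem exists_isUniformMatching_card_eq (hr : r ≠ 0) :
    ∀ {k : ℕ} {V : Finset α}, r * k ≤ #V → ∃ M, IsUniformMatching V r M ∧ #M = k
  | 0, _, _ => ⟨∅, ⟨by simp, by simp⟩, rfl⟩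
  | k + 1, V, hV => by
    rw [Nat.mul_succ] at hV
    obtain ⟨Z, hZV, hZ⟩ := exists_subset_card_eq (show r ≤ #V by omega)
    obtain ⟨M, hM, rfl⟩ := exists_isUniformMatching_card_eq hr (k := k)
      (V := V \ Z) (by rw [card_sdiff_of_subset hZV]; omega)
    exact ⟨insert Z M, hM.insert subset_rfl hZV hZ,
      hM.card_insert subset_rfl (card_pos.1 (show 0 < #Z by omega))⟩

theorem apply_eq_of_forall_card_union_le {β : Type*} {V : Finset α} {c : Finset α → β}
    (hc : ∀ X ∈ V.powersetCard r, ∀ Y ∈ V.powersetCard r, #(X ∪ Y) ≤ r + 1 → c X = c Y)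
    {A B : Finset α} (hA : A ∈ V.powersetCard r) (hB : B ∈ V.powersetCard r) : c A = c B := by
  induction hd : #(A \ B) using Nat.strong_induction_on generalizing A with
  | _ d ih =>
  obtain ⟨hAV, hAr⟩ := mem_powersetCard.1 hA
  obtain ⟨hBV, hBr⟩ := mem_powersetCard.1 hB
  obtain hAB | ⟨a, ha⟩ := (A \ B).eq_empty_or_nonempty
  · rw [eq_of_subset_of_card_le (sdiff_eq_empty_iff_subset.1 hAB) (hBr.trans hAr.symm).le]
  obtain ⟨b, hb⟩ : (B \ A).Nonempty := by
    rw [← card_pos, card_sdiff_comm (by omega)]; exact card_pos.2 ⟨a, ha⟩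
  have hda : #((A \ B).erase a) < d := hd ▸ card_erase_lt_of_mem ha
  rw [mem_sdiff] at ha hb
  -- exchanging `a` for `b` moves `A` one step towards `B` in the Johnson graph
  set A' := insert b (A.erase a)
  have hA' : A' ∈ V.powersetCard r := by
    rw [mem_powersetCard, card_insert_of_notMem (fun h => hb.2 (mem_of_mem_erase h)),
      card_erase_of_mem ha.1]
    exact ⟨insert_subset (hBV hb.1) ((erase_subset a A).trans hAV),
      by have := card_pos.2 ⟨a, ha.1⟩; omega⟩
  have hunion : A ∪ A' = insert b A := by
    ext x; simp only [A', mem_union, mem_insert, mem_erase]; grind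
  have hcloser : A' \ B = (A \ B).erase a := by
    ext x; simp only [A', mem_sdiff, mem_insert, mem_erase]; grind
  calc c A = c A' := hc A hA A' hA' <| by
        rw [hunion]; exact (card_insert_le b A).trans (by omega)
    _ = c B := ih _ (hcloser ▸ hda) hA' rfl

theorem exists_isUniformMatching_card_eq_forall_eq (hr : r ≠ 0) (c : Finset α → Bool) :
    ∀ {k : ℕ} {V : Finset α}, (r + 1) * k ≤ #V + 1 →
      ∃ b M, IsUniformMatching V r M ∧ #M = k ∧ ∀ A ∈ M, c A = b
  | 0, _, _ => ⟨true, ∅, ⟨by simp, by simp⟩, rfl, by simp⟩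
  | k + 1, V, hV => by
    rw [Nat.mul_succ] at hV
    by_cases hloc : ∀ X ∈ V.powersetCard r, ∀ Y ∈ V.powersetCard r, #(X ∪ Y) ≤ r + 1 → c X = c Y
    · obtain ⟨M, hM, hMk⟩ := exists_isUniformMatching_card_eq hr (k := k + 1) (V := V)
        (by rw [Nat.mul_succ]; nlinarith)
      obtain ⟨A₀, hA₀⟩ := card_pos.1 (show 0 < #M by omega)
      have hmem : ∀ A ∈ M, A ∈ V.powersetCard r := fun A hA => mem_powersetCard.2 (hM.1 A hA)
      exact ⟨c A₀, M, hM, hMk, fun A hA =>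
        apply_eq_of_forall_card_union_le hloc (hmem A hA) (hmem A₀ hA₀)⟩
    · push Not at hloc
      obtain ⟨X, hX, Y, hY, hXY, hcXY⟩ := hloc
      rw [mem_powersetCard] at hX hY
      have hU : X ∪ Y ⊆ V := union_subset hX.1 hY.1
      obtain ⟨b, M, hM, rfl, hMb⟩ := exists_isUniformMatching_card_eq_forall_eq hr c (k := k)
        (V := V \ (X ∪ Y)) (by rw [card_sdiff_of_subset hU]; have := card_le_card hU; omega)
      obtain ⟨Z, hZU, hZV, hZr, hZb⟩ : ∃ Z ⊆ X ∪ Y, Z ⊆ V ∧ #Z = r ∧ c Z = b := by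
        by_cases hXb : c X = b
        · exact ⟨X, subset_union_left, hX.1, hX.2, hXb⟩
        · exact ⟨Y, subset_union_right, hY.1, hY.2, by cases b <;> simp_all⟩
      refine ⟨b, insert Z M, hM.insert hZU hZV hZr,
        hM.card_insert hZU (card_pos.1 (show 0 < #Z by omega)), ?_⟩
      simp only [mem_insert, forall_eq_or_imp]
      exact ⟨hZb, hMb⟩

end UniformMatching

section Ramsey

variable [DecidableEq α] (c : α → α → Bool)

theorem exists_insert_of_subset_filter (hc : ∀ u v, c u v = c v u) {V S : Finset α} {v : α}
    {b : Bool} (hv : v ∈ V) (hS : S ⊆ (V.erase v).filter (c v · = b))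
    (hSb : (S : Set α).Pairwise (c · · = b)) :
    ∃ S' ⊆ V, #S' = #S + 1 ∧ (S' : Set α).Pairwise (c · · = b) := by
  have hSv : ∀ u ∈ S, u ∈ V.erase v ∧ c v u = b := fun u hu => mem_filter.1 (hS hu)
  refine ⟨insert v S, insert_subset hv fun u hu => mem_of_mem_erase (hSv u hu).1,
    card_insert_of_notMem fun hvS => (mem_erase.1 (hSv v hvS).1).1 rfl, ?_⟩
  rw [coe_insert]
  exact hSb.insert fun u hu _ => ⟨(hSv u hu).2, hc u v ▸ (hSv u hu).2⟩

theorem exists_monochromatic_of_choose_le (hc : ∀ u v, c u v = c v u) :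
    ∀ (s t : ℕ) (V : Finset α), (s + t).choose s ≤ #V →
      (∃ S ⊆ V, #S = s ∧ (S : Set α).Pairwise (c · · = true)) ∨
      (∃ S ⊆ V, #S = t ∧ (S : Set α).Pairwise (c · · = false))
  | 0, _, _, _ => .inl ⟨∅, by simp⟩
  | _ + 1, 0, _, _ => .inr ⟨∅, by simp⟩
  | s + 1, t + 1, V, hV => by
    have hpascal : (s + 1 + (t + 1)).choose (s + 1) =
        (s + (t + 1)).choose s + (s + 1 + t).choose (s + 1) := by
      rw [show s + 1 + (t + 1) = s + (t + 1) + 1 by ring, Nat.choose_succ_succ,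
        show s + (t + 1) = s + 1 + t by ring]
    obtain ⟨v, hv⟩ : V.Nonempty := card_pos.1 ((Nat.choose_pos (by omega)).trans_le hV)
    set R := (V.erase v).filter (c v · = true)
    set B := (V.erase v).filter (c v · = false)
    have hsplit : #R + #B + 1 = #V := by
      have := card_filter_add_card_filter_not (s := V.erase v) (p := (c v · = true))
      simp only [Bool.not_eq_true] at this
      rw [this, card_erase_add_one hv]
    by_cases hR : (s + (t + 1)).choose s ≤ #R
    · rcases exists_monochromatic_of_choose_le hc s (t + 1) R hR with
        ⟨S, hSR, rfl, hS⟩ | ⟨S, hSR, hSt, hS⟩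
      · exact .inl (exists_insert_of_subset_filter c hc hv hSR hS)
      · exact .inr ⟨S, hSR.trans ((filter_subset _ _).trans (erase_subset v V)), hSt, hS⟩
    · rcases exists_monochromatic_of_choose_le hc (s + 1) t B (by omega) with
        ⟨S, hSB, hSs, hS⟩ | ⟨S, hSB, rfl, hS⟩
      · exact .inl ⟨S, hSB.trans ((filter_subset _ _).trans (erase_subset v V)), hSs, hS⟩
      · exact .inr (exists_insert_of_subset_filter c hc hv hSB hS)

end Ramsey

theorem ramseyProp_choose (s t : ℕ) : RamseyProp ((s + t).choose s) s t := fun c hc =>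
  exists_monochromatic_of_choose_le c hc s t _ (card_range _).ge

namespace RamseyProp

variable {n s t : ℕ}

theorem min_le (h : RamseyProp n s t) : min s t ≤ n := by
  rcases h (fun _ _ => true) (fun _ _ => rfl) with ⟨S, hS, rfl, -⟩ | ⟨S, hS, rfl, -⟩ <;>
  · have := card_le_card hS
    rw [card_range] at this
    omega

theorem exists_monochromatic [Nonempty α] [DecidableEq α] (h : RamseyProp n s t)
    (c : α → α → Bool) (hc : ∀ u v, c u v = c v u) {W : Finset α} (hW : n ≤ #W) :
    (∃ S ⊆ W, #S = s ∧ (S : Set α).Pairwise (c · · = true)) ∨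
      (∃ S ⊆ W, #S = t ∧ (S : Set α).Pairwise (c · · = false)) := by
  obtain ⟨f, hfW, hf⟩ := (range n).finite_toSet.exists_injOn_of_encard_le (t := (W : Set α))
    (by simp only [Set.encard_coe_eq_coe_finsetCard, card_range]; exact_mod_cast hW)
  have transport : ∀ {S : Finset ℕ} {k : ℕ} {b : Bool}, S ⊆ range n → #S = k →
      (S : Set ℕ).Pairwise (fun u v => c (f u) (f v) = b) →
      ∃ T ⊆ W, #T = k ∧ (T : Set α).Pairwise (c · · = b) := fun {S} _ _ hSn hSk hS =>
    ⟨S.image f, fun _ hx => by obtain ⟨u, hu, rfl⟩ := mem_image.1 hx; exact hfW (hSn hu),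
      (card_image_of_injOn (hf.mono (coe_subset.2 hSn))).trans hSk,
      by rw [coe_image]; exact (hf.mono (coe_subset.2 hSn)).pairwise_image.2 hS⟩
  exact (h (fun u v => c (f u) (f v)) fun u v => hc _ _).imp
    (fun ⟨S, hSn, hSs, hS⟩ => transport hSn hSs hS) (fun ⟨S, hSn, hSt, hS⟩ => transport hSn hSt hS)

end RamseyProp

theorem exists_isUniformMatching_card_eq_pairwise_eq [DecidableEq α] {V : Finset α} {m r s : ℕ}
    (hr : r ≠ 0) (hs : 2 ≤ s) (hR : RamseyProp m s (s - 1))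
    (c : Finset α → Finset α → Bool) (hc : ∀ A B, c A B = c B A)
    (hV : (m + 1) * r + m - 1 ≤ #V) :
    ∃ b S, IsUniformMatching V r S ∧ #S = s ∧ (S : Set (Finset α)).Pairwise (c · · = b) := by
  have hm : 1 ≤ m := le_trans (by omega) hR.min_le
  have h₁ : (m + 1) * r = m * r + r := by ring
  have h₂ : (r + 1) * m = m * r + m := by ring
  obtain ⟨A₀, hA₀V, hA₀r⟩ := exists_subset_card_eq (s := V) (n := r) (by omega)
  obtain ⟨b, M, hM, hMm, hMb⟩ := exists_isUniformMatching_card_eq_forall_eq hr (c A₀)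
    (k := m) (V := V \ A₀) (by rw [card_sdiff_of_subset hA₀V]; omega)
  rcases hR.exists_monochromatic (fun A B => c A B != b) (fun A B => by rw [hc]) hMm.ge with
    ⟨S, hSM, hSs, hS⟩ | ⟨S, hSM, hSs, hS⟩
  · exact ⟨!b, S, (hM.subset hSM).mono sdiff_subset, hSs,
      hS.mono' fun A B h => Bool.eq_not_iff.2 (by simpa using h)⟩
  · have hSA₀ := (hM.subset hSM).card_insert subset_rfl (card_pos.1 (show 0 < #A₀ by omega))
    refine ⟨b, insert A₀ S, (hM.subset hSM).insert subset_rfl hA₀V hA₀r, by omega, ?_⟩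
    rw [coe_insert]
    exact (hS.mono' fun A B h => by simpa using h).insert fun B hB _ =>
      ⟨hMb B (hSM hB), hc A₀ B ▸ hMb B (hSM hB)⟩

theorem kneserRamseyProp_of_ramseyProp_s4 {m r s : ℕ} (hr : r ≠ 0) (hs : 2 ≤ s)
    (hR : RamseyProp m s (s - 1)) : KneserRamseyProp ((m + 1) * r + m - 1) r s s := by
  intro c hc
  obtain ⟨b, S, hS, hSs, hSb⟩ :=
    exists_isUniformMatching_card_eq_pairwise_eq (V := range _) hr hs hR c hc (card_range _).ge
  -- `IsKneserClique n r` and `MonoClique c b` unfold to `IsUniformMatching (range n) r` and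
  -- `Set.Pairwise (c · · = b)`
  cases b
  · exact .inr ⟨S, hS, hSs, hSb⟩
  · exact .inl ⟨S, hS, hSs, hSb⟩

theorem rkg_diagonal_upper (r s : ℕ) (hr : 2 ≤ r) (hs : 3 ≤ s) :
    RKG r s s ≤ (ramseyNumber s (s - 1) + 1) * r + ramseyNumber s (s - 1) - 1 :=
  Nat.sInf_le (kneserRamseyProp_of_ramseyProp_s4 (by omega) (by omega)
    (ramseyProp_ramseyNumber s (s - 1)))
end

section
/- For every r ≥ 2, RKG_r(3,3) ≥ 3r + 2; that is, there exists a red/blue edge-coloring of the Kneser graph KG(3r+1, r) with no monochromatic triangle. -/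
open Finset

/-!
Color red exactly the edges between `Z` and `X ∪ Y`. A red triangle would need three sets with
pairwise different `Z`-membership. A blue triangle lies either inside `Z`, impossible because three
disjoint `r`-sets do not fit into `3r - 1` points, or inside `X ∪ Y`, impossible because each of its
sets contains one of the two points `3r - 1`, `3r`. For the upper bound needed to make `RKG` finite,
`R(3,3) ≤ 6` transfers to `KG(6r, r)` through six disjoint blocks.
-/

section PairwiseDisjoint

variable {α : Type*} [DecidableEq α] {S : Finset (Finset α)}

theorem sum_card_inter_le_of_pairwise_disjoint (hS : (S : Set (Finset α)).Pairwise Disjoint)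
    (T : Finset α) : ∑ A ∈ S, (A ∩ T).card ≤ T.card := by
  rw [← card_biUnion fun A hA B hB hAB =>
    (hS hA hB hAB).mono inter_subset_left inter_subset_left]
  exact card_le_card (biUnion_subset.2 fun _ _ => inter_subset_right)

theorem card_le_of_pairwise_disjoint_of_inter_nonempty
    (hS : (S : Set (Finset α)).Pairwise Disjoint) {T : Finset α}
    (hT : ∀ A ∈ S, (A ∩ T).Nonempty) : S.card ≤ T.card :=
  calc S.card = ∑ _A ∈ S, 1 := card_eq_sum_ones S
    _ ≤ ∑ A ∈ S, (A ∩ T).card := sum_le_sum fun A hA => (hT A hA).card_pos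
    _ ≤ T.card := sum_card_inter_le_of_pairwise_disjoint hS T

theorem card_mul_le_of_pairwise_disjoint_of_subset
    (hS : (S : Set (Finset α)).Pairwise Disjoint) {T : Finset α} {r : ℕ}
    (hT : ∀ A ∈ S, A ⊆ T ∧ A.card = r) : S.card * r ≤ T.card :=
  calc S.card * r = ∑ A ∈ S, (A ∩ T).card := by
        rw [← smul_eq_mul, ← sum_const]
        exact sum_congr rfl fun A hA => by rw [inter_eq_left.2 (hT A hA).1, (hT A hA).2]
    _ ≤ T.card := sum_card_inter_le_of_pairwise_disjoint hS T

end PairwiseDisjoint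

theorem IsKneserClique.mono {n m r : ℕ} {S : Finset (Finset ℕ)} (hnm : n ≤ m)
    (hS : IsKneserClique n r S) : IsKneserClique m r S :=
  ⟨fun A hA => ⟨(hS.1 A hA).1.trans (range_subset_range.2 hnm), (hS.1 A hA).2⟩, hS.2⟩

theorem KneserRamseyProp.mono {n m r s t : ℕ} (hnm : n ≤ m) (h : KneserRamseyProp n r s t) :
    KneserRamseyProp m r s t := fun c hc =>
  (h c hc).imp (fun ⟨S, hS, hs, hc⟩ => ⟨S, hS.mono hnm, hs, hc⟩)
    fun ⟨S, hS, ht, hc⟩ => ⟨S, hS.mono hnm, ht, hc⟩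

theorem lt_RKG_of_not_kneserRamseyProp {m r s t : ℕ} (hex : ∃ n, KneserRamseyProp n r s t)
    (hm : ¬ KneserRamseyProp m r s t) : m < RKG r s t :=
  le_csInf hex fun _ hn => Nat.lt_of_not_le fun hle => hm (KneserRamseyProp.mono hle hn)

def block (r i : ℕ) : Finset ℕ := Ico (i * r) ((i + 1) * r)

theorem card_block (r i : ℕ) : (block r i).card = r := by
  simp only [block, Nat.card_Ico, add_mul, one_mul, add_tsub_cancel_left]

theorem block_subset_range {r i m : ℕ} (him : i < m) : block r i ⊆ range (m * r) :=
  fun _ hx => mem_range.2 ((mem_Ico.1 hx).2.trans_le (Nat.mul_le_mul_right r him))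

theorem disjoint_block {r i j : ℕ} (hij : i ≠ j) : Disjoint (block r i) (block r j) := by
  wlog hlt : i < j generalizing i j
  · exact (this hij.symm (by omega)).symm
  exact Ico_disjoint_Ico_consecutive _ _ _ |>.mono_right
    (Ico_subset_Ico_left (Nat.mul_le_mul_right r hlt))

theorem block_injective {r : ℕ} (hr : 0 < r) : Function.Injective (block r) := by
  intro i j hij
  by_contra hne
  have h := disjoint_block (r := r) hne
  rw [hij, disjoint_self, bot_eq_empty, ← card_eq_zero, card_block] at h
  omega

theorem RamseyProp.kneserRamseyProp {m r s t : ℕ} (hr : 0 < r) (h : RamseyProp m s t) :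
    KneserRamseyProp (m * r) r s t := by
  intro c hc
  have lift : ∀ (b : Bool) (k : ℕ), (∃ S : Finset ℕ, S ⊆ range m ∧ S.card = k ∧
      ∀ u ∈ S, ∀ v ∈ S, u ≠ v → c (block r u) (block r v) = b) →
      ∃ S, IsKneserClique (m * r) r S ∧ S.card = k ∧ MonoClique c b S := by
    rintro b k ⟨S, hSm, rfl, hmono⟩
    refine ⟨S.image (block r), ⟨?_, ?_⟩, card_image_of_injective S (block_injective hr), ?_⟩
    · simp only [mem_image]
      rintro _ ⟨i, hi, rfl⟩
      exact ⟨block_subset_range (mem_range.1 (hSm hi)), card_block r i⟩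
    · simp only [coe_image]
      rintro _ ⟨i, -, rfl⟩ _ ⟨j, -, rfl⟩ hne
      exact disjoint_block fun hij => hne (congrArg _ hij)
    · simp only [MonoClique, mem_image]
      rintro _ ⟨i, hi, rfl⟩ _ ⟨j, hj, rfl⟩ hne
      exact hmono i hi j hj fun hij => hne (congrArg _ hij)
  exact (h _ fun u v => hc _ _).imp (lift true s) (lift false t)

theorem ramseyProp_six_three_three : RamseyProp 6 3 3 := by
  intro c hc
  suffices ∃ b, ∃ S ⊆ range 6, S.card = 3 ∧ ∀ u ∈ S, ∀ v ∈ S, u ≠ v → c u v = b by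
    obtain ⟨_ | _, h⟩ := this
    exacts [Or.inr h, Or.inl h]
  -- three of the five edges at `0` share a color `b`
  obtain ⟨b, -, hb⟩ := exists_lt_card_fiber_of_mul_lt_card_of_maps_to (s := Ioo 0 6)
    (t := univ) (f := c 0) (n := 2) (fun _ _ => mem_univ _) (by simp)
  obtain ⟨T, hT, hT3⟩ := exists_subset_card_eq hb
  have hT6 : ∀ x ∈ T, 0 < x ∧ x < 6 ∧ c 0 x = b := fun x hx => by
    simpa [and_assoc] using hT hx
  by_cases hpair : ∃ x ∈ T, ∃ y ∈ T, x ≠ y ∧ c x y = b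
  · obtain ⟨x, hx, y, hy, hxy, hcxy⟩ := hpair
    obtain ⟨hx0, hx6, hc0x⟩ := hT6 x hx
    obtain ⟨hy0, hy6, hc0y⟩ := hT6 y hy
    refine ⟨b, {0, x, y}, ?_, card_eq_three.2 ⟨0, x, y, by omega, by omega, hxy, rfl⟩, ?_⟩
    · simp [insert_subset_iff, hx6, hy6]
    · simp only [mem_insert, mem_singleton]
      rintro u (rfl | rfl | rfl) v (rfl | rfl | rfl) huv <;>
        first | exact absurd rfl huv | assumption | (rw [hc]; assumption)
  · push Not at hpair
    exact ⟨!b, T, fun x hx => mem_range.2 (hT6 x hx).2.1, hT3,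
      fun u hu v hv huv => Bool.eq_not_iff.2 (hpair u hu v hv huv)⟩

section CutColoring

variable {p : Finset ℕ → Bool} {S : Finset (Finset ℕ)}

theorem MonoClique.card_le_two_of_bne (h : MonoClique (fun A B => p A != p B) true S) : S.card ≤ 2 := by
  by_contra! hS
  obtain ⟨A, hA, B, hB, hAB, hp⟩ := exists_ne_map_eq_of_card_lt_of_maps_to (t := univ)
    (by simpa using hS) fun _ _ => mem_coe.2 (mem_univ (p _))
  exact absurd hp (by simpa using h A hA B hB hAB)

theorem MonoClique.eq_of_bne (h : MonoClique (fun A B => p A != p B) false S) :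
    ∀ A ∈ S, ∀ B ∈ S, p A = p B := fun A hA B hB => by
  by_cases hAB : A = B
  · rw [hAB]
  · simpa using h A hA B hB hAB

end CutColoring

theorem IsKneserClique.card_le_two_of_subset_range {n r : ℕ} {S : Finset (Finset ℕ)}
    (hr : 0 < r) (hS : IsKneserClique n r S) (hZ : ∀ A ∈ S, A ⊆ range (3 * r - 1)) :
    S.card ≤ 2 := by
  have h := card_mul_le_of_pairwise_disjoint_of_subset hS.2 fun A hA => ⟨hZ A hA, (hS.1 A hA).2⟩
  rw [card_range] at h
  by_contra! h3
  have := Nat.mul_le_mul_right r h3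
  omega

theorem IsKneserClique.card_le_two_of_not_subset_range {r : ℕ} {S : Finset (Finset ℕ)}
    (hS : IsKneserClique (3 * r + 1) r S) (hXY : ∀ A ∈ S, ¬ A ⊆ range (3 * r - 1)) :
    S.card ≤ 2 := by
  have hmeet : ∀ A ∈ S, (A ∩ Ico (3 * r - 1) (3 * r + 1)).Nonempty := fun A hA => by
    obtain ⟨x, hxA, hx⟩ := not_subset.1 (hXY A hA)
    have := mem_range.1 ((hS.1 A hA).1 hxA)
    exact ⟨x, mem_inter.2 ⟨hxA, mem_Ico.2 ⟨by simpa using hx, this⟩⟩⟩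
  calc S.card ≤ (Ico (3 * r - 1) (3 * r + 1)).card :=
        card_le_of_pairwise_disjoint_of_inter_nonempty hS.2 hmeet
    _ ≤ 2 := by rw [Nat.card_Ico]; omega

/-- With `[3r+1] = {0, …, 3r}`, put `X` = the sets containing `3r`, `Y` = the sets containing
`3r-1` but not `3r`, and `Z` = the subsets of `[3r-1]`. On edges this is the coloring that is blue
inside `Z` and between `X` and `Y`, since two disjoint sets never both lie in `X` or both in `Y`. -/
def kneserColoring (r : ℕ) (A B : Finset ℕ) : Bool :=
  decide (A ⊆ range (3 * r - 1)) != decide (B ⊆ range (3 * r - 1))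

theorem not_kneserRamseyProp_three_mul_add_one {r : ℕ} (hr : 0 < r) :
    ¬ KneserRamseyProp (3 * r + 1) r 3 3 := by
  intro h
  rcases h (kneserColoring r) fun A B => bne_comm with
    ⟨S, -, hS3, hred⟩ | ⟨S, hS, hS3, hblue⟩
  · have := hred.card_le_two_of_bne
    omega
  · obtain ⟨A, hA⟩ := card_pos.1 (by omega : 0 < S.card)
    have hsame := hblue.eq_of_bne A hA
    by_cases hAZ : A ⊆ range (3 * r - 1)
    · have := hS.card_le_two_of_subset_range hr fun B hB => by simpa [hAZ] using hsame B hB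
      omega
    · have := hS.card_le_two_of_not_subset_range fun B hB => by simpa [hAZ] using hsame B hB
      omega

theorem rkg_three_three_lower (r : ℕ) (hr : 2 ≤ r) :
    3 * r + 2 ≤ RKG r 3 3 :=
  lt_RKG_of_not_kneserRamseyProp ⟨6 * r, ramseyProp_six_three_three.kneserRamseyProp (by omega)⟩
    (not_kneserRamseyProp_three_mul_add_one (by omega))
end

section
/- Let k ≥ 12 be divisible by 6. Then every red/blue edge-coloring of the complete graph on the vertex set of all k-element subsets of a (7k/3)-element set contains a monochromatic triangle A, B, C with A ∩ B ∩ C = ∅. -/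
/-!
Replace each point `i < 7` by the block `[i m, i m + m)`. Unions of three blocks are `3m`-subsets
of `range (7m)` and intersections of block unions are block unions, so a colouring of `3m`-sets
pulls back to a colouring of the triples of `range 7`, and it suffices to treat `m = 1`. There,
fix the apex `A = {0, 1, 2}`. If `A, P, Q, R` have all four triple intersections empty and `A`
sees `P, Q, R` in one colour, then one of the four triangles of `{A, P, Q, R}` is monochromatic.
The colours of the edges from `A` to eleven suitable triples cannot avoid all sixteen such
configurations.
-/

open Finset

def IsGoodTriangle (n r : ℕ) (A B C : Finset ℕ) : Prop :=
  A ⊆ range n ∧ B ⊆ range n ∧ C ⊆ range n ∧ #A = r ∧ #B = r ∧ #C = r ∧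
    A ≠ B ∧ A ≠ C ∧ B ≠ C ∧ A ∩ B ∩ C = ∅

instance (n r : ℕ) (A B C : Finset ℕ) : Decidable (IsGoodTriangle n r A B C) := by
  unfold IsGoodTriangle; infer_instance

def HasMonoTriangle (n r : ℕ) : Prop :=
  ∀ c : Finset ℕ → Finset ℕ → Bool, ∃ A B C : Finset ℕ,
    IsGoodTriangle n r A B C ∧ c A B = c A C ∧ c A C = c B C

lemma mono_of_apex {α : Type*} (c : α → α → Bool) {a p q r : α}
    (hpq : c a p = c a q) (hqr : c a q = c a r) :
    (c a p = c a q ∧ c a q = c p q) ∨ (c a p = c a r ∧ c a r = c p r) ∨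
      (c a q = c a r ∧ c a r = c q r) ∨ (c p q = c p r ∧ c p r = c q r) := by
  rw [hpq, hqr]
  cases c a r <;> cases c p q <;> cases c p r <;> cases c q r <;> simp

lemma exists_mono_of_apex {n r : ℕ} (c : Finset ℕ → Finset ℕ → Bool) {A P Q R : Finset ℕ}
    (hgood : IsGoodTriangle n r A P Q ∧ IsGoodTriangle n r A P R ∧ IsGoodTriangle n r A Q R ∧
      IsGoodTriangle n r P Q R)
    (hmono : c A P = c A Q ∧ c A Q = c A R) :
    ∃ B C D, IsGoodTriangle n r B C D ∧ c B C = c B D ∧ c B D = c C D := by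
  obtain ⟨hPQ, hPR, hQR, h⟩ := hgood
  rcases mono_of_apex c hmono.1 hmono.2 with e | e | e | e
  exacts [⟨_, _, _, hPQ, e⟩, ⟨_, _, _, hPR, e⟩, ⟨_, _, _, hQR, e⟩, ⟨_, _, _, h, e⟩]

-- `b1, …, b11` are the colours `c A P` for the eleven triples `P` listed in
-- `hasMonoTriangle_seven_three`, and each hypothesis is one quadruple `{A, P, Q, R}`.
set_option synthInstance.maxSize 10000 in
lemma apexHypergraph_not_two_colorable (b1 b2 b3 b4 b5 b6 b7 b8 b9 b10 b11 : Bool)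
    (e1 : ¬(b6 = b8 ∧ b8 = b11)) (e2 : ¬(b6 = b11 ∧ b11 = b4)) (e3 : ¬(b6 = b10 ∧ b10 = b9))
    (e4 : ¬(b6 = b2 ∧ b2 = b9)) (e5 : ¬(b6 = b3 ∧ b3 = b7)) (e6 : ¬(b8 = b11 ∧ b11 = b3))
    (e7 : ¬(b8 = b11 ∧ b11 = b5)) (e8 : ¬(b8 = b10 ∧ b10 = b1)) (e9 : ¬(b8 = b5 ∧ b5 = b4))
    (e10 : ¬(b11 = b10 ∧ b10 = b2)) (e11 : ¬(b11 = b10 ∧ b10 = b5))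
    (e12 : ¬(b11 = b10 ∧ b10 = b7)) (e13 : ¬(b11 = b1 ∧ b1 = b9))
    (e14 : ¬(b10 = b3 ∧ b3 = b5)) (e15 : ¬(b10 = b3 ∧ b3 = b9))
    (e16 : ¬(b10 = b7 ∧ b7 = b4)) : False := by
  revert b1 b2 b3 b4 b5 b6 b7 b8 b9 b10 b11
  decide

lemma hasMonoTriangle_seven_three : HasMonoTriangle 7 3 := by
  intro c
  by_contra hc
  set A : Finset ℕ := {0, 1, 2}
  have apex (P Q R : Finset ℕ) (hgood : IsGoodTriangle 7 3 A P Q ∧ IsGoodTriangle 7 3 A P R ∧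
      IsGoodTriangle 7 3 A Q R ∧ IsGoodTriangle 7 3 P Q R) :
      ¬(c A P = c A Q ∧ c A Q = c A R) :=
    fun hmono => hc (exists_mono_of_apex c hgood hmono)
  exact apexHypergraph_not_two_colorable
    (c A {0, 1, 5}) (c A {0, 3, 4}) (c A {0, 4, 5}) (c A {0, 4, 6}) (c A {1, 3, 4})
    (c A {1, 3, 5}) (c A {2, 3, 4}) (c A {2, 3, 6}) (c A {2, 4, 6}) (c A {3, 5, 6})
    (c A {4, 5, 6})
    (apex _ _ _ (by decide)) (apex _ _ _ (by decide)) (apex _ _ _ (by decide))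
    (apex _ _ _ (by decide)) (apex _ _ _ (by decide)) (apex _ _ _ (by decide))
    (apex _ _ _ (by decide)) (apex _ _ _ (by decide)) (apex _ _ _ (by decide))
    (apex _ _ _ (by decide)) (apex _ _ _ (by decide)) (apex _ _ _ (by decide))
    (apex _ _ _ (by decide)) (apex _ _ _ (by decide)) (apex _ _ _ (by decide))
    (apex _ _ _ (by decide))

def blowup (m : ℕ) [NeZero m] (S : Finset ℕ) : Finset ℕ :=
  (S ×ˢ univ).map (Nat.divModEquiv m).symm.toEmbedding

section blowup

variable {m : ℕ} [NeZero m]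

@[simp]
lemma mem_blowup {S : Finset ℕ} {x : ℕ} : x ∈ blowup m S ↔ x / m ∈ S := by
  simp [blowup, Finset.mem_map_equiv]

lemma card_blowup (S : Finset ℕ) : #(blowup m S) = #S * m := by
  simp [blowup]

lemma blowup_inter (S T : Finset ℕ) : blowup m (S ∩ T) = blowup m S ∩ blowup m T := by
  ext; simp

lemma blowup_empty : blowup m ∅ = ∅ := by
  ext; simp

lemma blowup_injective : Function.Injective (blowup m) := by
  intro S T h
  ext i
  simpa [Nat.mul_div_cancel _ (NeZero.pos m)] using Finset.ext_iff.mp h (i * m)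

lemma blowup_subset_range {n : ℕ} {S : Finset ℕ} (h : S ⊆ range n) :
    blowup m S ⊆ range (n * m) := by
  intro x hx
  simpa [Nat.div_lt_iff_lt_mul (NeZero.pos m)] using h (mem_blowup.mp hx)

lemma IsGoodTriangle.blowup {n r : ℕ} {A B C : Finset ℕ} (h : IsGoodTriangle n r A B C) :
    IsGoodTriangle (n * m) (r * m) (blowup m A) (blowup m B) (blowup m C) := by
  obtain ⟨hA, hB, hC, cA, cB, cC, hAB, hAC, hBC, hABC⟩ := h
  refine ⟨blowup_subset_range hA, blowup_subset_range hB, blowup_subset_range hC,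
    by rw [card_blowup, cA], by rw [card_blowup, cB], by rw [card_blowup, cC],
    blowup_injective.ne hAB, blowup_injective.ne hAC, blowup_injective.ne hBC, ?_⟩
  rw [← blowup_inter, ← blowup_inter, hABC, blowup_empty]

lemma HasMonoTriangle.blowup {n r : ℕ} (h : HasMonoTriangle n r) :
    HasMonoTriangle (n * m) (r * m) := by
  intro c
  obtain ⟨A, B, C, hgood, hmono⟩ := h fun S T => c (_root_.blowup m S) (_root_.blowup m T)
  exact ⟨_, _, _, hgood.blowup, hmono⟩

end blowup

theorem mono_triangle_empty_intersection_seven_thirds_general (k : ℕ) (hk : 12 ≤ k) (hdvd : 6 ∣ k)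
    (c : Finset ℕ → Finset ℕ → Bool) :
    ∃ A B C : Finset ℕ,
      A ⊆ Finset.range (7 * k / 3) ∧ B ⊆ Finset.range (7 * k / 3) ∧
      C ⊆ Finset.range (7 * k / 3) ∧
      A.card = k ∧ B.card = k ∧ C.card = k ∧
      A ≠ B ∧ A ≠ C ∧ B ≠ C ∧
      A ∩ B ∩ C = ∅ ∧
      c A B = c A C ∧ c A C = c B C := by
  obtain ⟨m, rfl⟩ : 3 ∣ k := dvd_trans (by norm_num) hdvd
  have : NeZero m := ⟨by omega⟩
  rw [show 7 * (3 * m) / 3 = 7 * m by omega]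
  simpa only [IsGoodTriangle, and_assoc] using hasMonoTriangle_seven_three.blowup (m := m) c

theorem mono_triangle_empty_intersection_seven_thirds (k : ℕ) (hk : 12 ≤ k) (hdvd : 6 ∣ k)
    (c : Finset ℕ → Finset ℕ → Bool) (hsym : ∀ A B, c A B = c B A) :
    ∃ A B C : Finset ℕ,
      A ⊆ Finset.range (7 * k / 3) ∧ B ⊆ Finset.range (7 * k / 3) ∧
      C ⊆ Finset.range (7 * k / 3) ∧
      A.card = k ∧ B.card = k ∧ C.card = k ∧
      A ≠ B ∧ A ≠ C ∧ B ≠ C ∧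
      A ∩ B ∩ C = ∅ ∧
      c A B = c A C ∧ c A C = c B C :=
  mono_triangle_empty_intersection_seven_thirds_general k hk hdvd c
end

section
/- Bollobás set-pair inequality: let (A_1,B_1),...,(A_m,B_m) be pairs of finite sets with |A_i| = a and |B_i| = b for all i, A_i ∩ B_i = ∅ for all i, and A_i ∩ B_j ≠ ∅ for all i ≠ j. Then m ≤ C(a+b, a). Moreover, if m = C(a+b,a), then there is a set S with |S| = a+b such that the A_i are exactly the a-subsets of S and B_i = S \ A_i for each i. -/
open Finset
namespace Bollobas















/-- Any priority function can be refined to a position equiv. -/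
lemma exists_mono_equiv {β : Type*} [Fintype β] [DecidableEq β] (w : β → ℕ) :
    ∃ p : β ≃ Fin (Fintype.card β), ∀ x y, w x < w y → p x < p y := by
  classical
  set n := Fintype.card β with hn
  rcases Nat.eq_zero_or_pos n with h0 | hpos
  · have hemp : IsEmpty β := Fintype.card_eq_zero_iff.mp (by rw [← hn]; exact h0)
    exact ⟨Fintype.equivFinOfCardEq rfl, fun x => (hemp.false x).elim⟩
  · set e := Fintype.equivFin β with he
    set w' : β → ℕ := fun x => w x * n + (e x : ℕ) with hw'
    have hw'inj : Function.Injective w' := by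
      intro x y hxy
      have hex : (e x : ℕ) < n := (e x).2
      have hey : (e y : ℕ) < n := (e y).2
      have hwxy : w x = w y := by
        by_contra hne
        rcases Nat.lt_or_ge (w x) (w y) with h | h
        · have : w' x < w' y := by
            calc w' x = w x * n + (e x : ℕ) := rfl
              _ < w x * n + n := Nat.add_lt_add_left (e x).2 _
              _ = (w x + 1) * n := by ring
              _ ≤ w y * n := Nat.mul_le_mul_right n h
              _ ≤ w' y := Nat.le_add_right _ _
          omega
        · have h' : w y < w x := by omega
          have : w' y < w' x := by
            calc w' y = w y * n + (e y : ℕ) := rfl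
              _ < w y * n + n := Nat.add_lt_add_left (e y).2 _
              _ = (w y + 1) * n := by ring
              _ ≤ w x * n := Nat.mul_le_mul_right n h'
              _ ≤ w' x := Nat.le_add_right _ _
          omega
      have hx1 : w' x = w x * n + (e x : ℕ) := rfl
      have hy1 : w' y = w y * n + (e y : ℕ) := rfl
      have hmn : w x * n = w y * n := by rw [hwxy]
      have : (e x : ℕ) = (e y : ℕ) := by omega
      exact e.injective (Fin.ext this)
    set L : Finset ℕ := Finset.univ.image w' with hL
    have hLcard : L.card = n := by
      rw [hL, Finset.card_image_of_injective _ hw'inj, Finset.card_univ]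
    set f : β → Fin n := fun x =>
      (L.orderIsoOfFin hLcard).symm ⟨w' x, by simp [hL]⟩ with hf
    have hfinj : Function.Injective f := by
      intro x y hxy
      apply hw'inj
      have := (L.orderIsoOfFin hLcard).symm.injective hxy
      exact congrArg Subtype.val this
    have hfbij : Function.Bijective f :=
      (Fintype.bijective_iff_injective_and_card f).mpr ⟨hfinj, by simp [hn]⟩
    refine ⟨Equiv.ofBijective f hfbij, ?_⟩
    intro x y hxy
    show f x < f y
    have hw'lt : w' x < w' y := by
      have hex : (e x : ℕ) < n := (e x).2
      calc w' x = w x * n + (e x : ℕ) := rfl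
        _ < w x * n + n := Nat.add_lt_add_left (e x).2 _
        _ = (w x + 1) * n := by ring
        _ ≤ w y * n := Nat.mul_le_mul_right n hxy
        _ ≤ w' y := Nat.le_add_right _ _
    have : (⟨w' x, by simp [hL]⟩ : L) < ⟨w' y, by simp [hL]⟩ := hw'lt
    exact (L.orderIsoOfFin hLcard).symm.strictMono this

/-- From any finset we can select the `k` smallest elements. -/
lemma exists_initial_seg {β : Type*} [LinearOrder β] [DecidableEq β]
    (s : Finset β) (k : ℕ) (hk : k ≤ s.card) :
    ∃ t ⊆ s, t.card = k ∧ ∀ x ∈ t, ∀ y ∈ s \ t, x < y := by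
  induction k with
  | zero => exact ⟨∅, empty_subset s, rfl, by simp⟩
  | succ k ih =>
    obtain ⟨t, hts, htc, hlt⟩ := ih (Nat.le_of_succ_le hk)
    have hne : (s \ t).Nonempty := by
      rw [← Finset.card_pos, Finset.card_sdiff_of_subset hts]
      omega
    have hzmem : (s \ t).min' hne ∈ s \ t := (s \ t).min'_mem hne
    refine ⟨insert ((s \ t).min' hne) t, ?_, ?_, ?_⟩
    · exact Finset.insert_subset (Finset.mem_sdiff.mp hzmem).1 hts
    · rw [Finset.card_insert_of_notMem (Finset.mem_sdiff.mp hzmem).2, htc]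
    · intro x hx y hy
      have hy' : y ∈ s \ t := by
        rw [Finset.mem_sdiff] at hy ⊢
        exact ⟨hy.1, fun h => hy.2 (Finset.mem_insert_of_mem h)⟩
      rcases Finset.mem_insert.mp hx with hxz | hx
      · have h1 : x ≤ y := by rw [hxz]; exact (s \ t).min'_le y hy'
        refine lt_of_le_of_ne h1 (fun h => (Finset.mem_sdiff.mp hy).2 ?_)
        rw [← h, hxz]
        exact Finset.mem_insert_self _ _
      · exact hlt x hx y hy'







lemma exists_glue {β : Type*} [Fintype β] [DecidableEq β] (P Q P' Q' : Finset β)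
    (hPQ : Disjoint P Q) (hPQ' : Disjoint P' Q')
    (hP : P.card = P'.card) (hQ : Q.card = Q'.card) :
    ∃ g : β ≃ β, (∀ x, x ∈ P ↔ g x ∈ P') ∧ (∀ x, x ∈ Q ↔ g x ∈ Q') := by
  classical
  have hR : (Finset.univ \ (P ∪ Q)).card = (Finset.univ \ (P' ∪ Q')).card := by
    rw [Finset.card_sdiff_of_subset (Finset.subset_univ _), Finset.card_sdiff_of_subset (Finset.subset_univ _),
      Finset.card_union_of_disjoint hPQ, Finset.card_union_of_disjoint hPQ', hP, hQ]
  set e1 := Finset.equivOfCardEq hP with he1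
  set e2 := Finset.equivOfCardEq hQ with he2
  set e3 := Finset.equivOfCardEq hR with he3
  have memR : ∀ x : β, x ∉ P → x ∉ Q → x ∈ Finset.univ \ (P ∪ Q) := by
    intro x hp hq; simp [hp, hq]
  have memR' : ∀ x : β, x ∉ P' → x ∉ Q' → x ∈ Finset.univ \ (P' ∪ Q') := by
    intro x hp hq; simp [hp, hq]
  set gf : β → β := fun x =>
    if h : x ∈ P then (e1 ⟨x, h⟩ : β)
    else if h2 : x ∈ Q then (e2 ⟨x, h2⟩ : β)
    else (e3 ⟨x, memR x h h2⟩ : β) with hgf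
  set gi : β → β := fun x =>
    if h : x ∈ P' then (e1.symm ⟨x, h⟩ : β)
    else if h2 : x ∈ Q' then (e2.symm ⟨x, h2⟩ : β)
    else (e3.symm ⟨x, memR' x h h2⟩ : β) with hgi
  have hmemP' : ∀ (z : {y // y ∈ P'}), (z : β) ∈ P' := fun z => z.2
  have key1 : ∀ x, gf x ∈ P' ↔ x ∈ P := by
    intro x
    constructor
    · intro hx
      by_contra hp
      rw [hgf] at hx
      simp only [dif_neg hp] at hx
      by_cases hq : x ∈ Q
      · simp only [dif_pos hq] at hx
        exact (Finset.disjoint_left.mp hPQ' hx) (e2 ⟨x, hq⟩).2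
      · simp only [dif_neg hq] at hx
        have := (e3 ⟨x, memR x hp hq⟩).2
        rw [Finset.mem_sdiff] at this
        exact this.2 (Finset.mem_union_left _ hx)
    · intro hx
      rw [hgf]; simp only [dif_pos hx]
      exact (e1 ⟨x, hx⟩).2
  have key2 : ∀ x, gf x ∈ Q' ↔ x ∈ Q := by
    intro x
    constructor
    · intro hx
      by_contra hq
      rw [hgf] at hx
      by_cases hp : x ∈ P
      · simp only [dif_pos hp] at hx
        exact (Finset.disjoint_left.mp hPQ' ((e1 ⟨x, hp⟩).2)) hx
      · simp only [dif_neg hp, dif_neg hq] at hx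
        have := (e3 ⟨x, memR x hp hq⟩).2
        rw [Finset.mem_sdiff] at this
        exact this.2 (Finset.mem_union_right _ hx)
    · intro hx
      have hp : x ∉ P := Finset.disjoint_right.mp hPQ hx
      rw [hgf]; simp only [dif_neg hp, dif_pos hx]
      exact (e2 ⟨x, hx⟩).2
  have left : ∀ x, gi (gf x) = x := by
    intro x
    by_cases hp : x ∈ P
    · have h1 : gf x = (e1 ⟨x, hp⟩ : β) := by rw [hgf]; simp only [dif_pos hp]
      have h2 : gf x ∈ P' := (key1 x).mpr hp
      rw [hgi]
      simp only [dif_pos h2]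
      have : (⟨gf x, h2⟩ : {y // y ∈ P'}) = e1 ⟨x, hp⟩ := Subtype.ext h1
      rw [this, Equiv.symm_apply_apply]
    · by_cases hq : x ∈ Q
      · have h1 : gf x = (e2 ⟨x, hq⟩ : β) := by rw [hgf]; simp only [dif_neg hp, dif_pos hq]
        have h2 : gf x ∈ Q' := (key2 x).mpr hq
        have h3 : gf x ∉ P' := fun h => hp ((key1 x).mp h)
        rw [hgi]
        simp only [dif_neg h3, dif_pos h2]
        have : (⟨gf x, h2⟩ : {y // y ∈ Q'}) = e2 ⟨x, hq⟩ := Subtype.ext h1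
        rw [this, Equiv.symm_apply_apply]
      · have h1 : gf x = (e3 ⟨x, memR x hp hq⟩ : β) := by
          rw [hgf]; simp only [dif_neg hp, dif_neg hq]
        have h3 : gf x ∉ P' := fun h => hp ((key1 x).mp h)
        have h4 : gf x ∉ Q' := fun h => hq ((key2 x).mp h)
        rw [hgi]
        simp only [dif_neg h3, dif_neg h4]
        have : (⟨gf x, memR' _ h3 h4⟩ : {y // y ∈ Finset.univ \ (P' ∪ Q')}) =
            e3 ⟨x, memR x hp hq⟩ := Subtype.ext h1
        rw [this, Equiv.symm_apply_apply]
  have right : ∀ x, gf (gi x) = x := by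
    intro x
    by_cases hp : x ∈ P'
    · have h1 : gi x = (e1.symm ⟨x, hp⟩ : β) := by rw [hgi]; simp only [dif_pos hp]
      have h2 : gi x ∈ P := by rw [h1]; exact (e1.symm ⟨x, hp⟩).2
      rw [hgf]
      simp only [dif_pos h2]
      have : (⟨gi x, h2⟩ : {y // y ∈ P}) = e1.symm ⟨x, hp⟩ := Subtype.ext h1
      rw [this, Equiv.apply_symm_apply]
    · by_cases hq : x ∈ Q'
      · have h1 : gi x = (e2.symm ⟨x, hq⟩ : β) := by rw [hgi]; simp only [dif_neg hp, dif_pos hq]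
        have h2 : gi x ∈ Q := by rw [h1]; exact (e2.symm ⟨x, hq⟩).2
        have h3 : gi x ∉ P := Finset.disjoint_right.mp hPQ h2
        rw [hgf]
        simp only [dif_neg h3, dif_pos h2]
        have : (⟨gi x, h2⟩ : {y // y ∈ Q}) = e2.symm ⟨x, hq⟩ := Subtype.ext h1
        rw [this, Equiv.apply_symm_apply]
      · have h1 : gi x = (e3.symm ⟨x, memR' x hp hq⟩ : β) := by
          rw [hgi]; simp only [dif_neg hp, dif_neg hq]
        have h2 : gi x ∈ Finset.univ \ (P ∪ Q) := by
          rw [h1]; exact (e3.symm ⟨x, memR' x hp hq⟩).2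
        rw [Finset.mem_sdiff] at h2
        have h3 : gi x ∉ P := fun h => h2.2 (Finset.mem_union_left _ h)
        have h4 : gi x ∉ Q := fun h => h2.2 (Finset.mem_union_right _ h)
        rw [hgf]
        simp only [dif_neg h3, dif_neg h4]
        have : (⟨gi x, memR _ h3 h4⟩ : {y // y ∈ Finset.univ \ (P ∪ Q)}) =
            e3.symm ⟨x, memR' x hp hq⟩ := Subtype.ext h1
        rw [this, Equiv.apply_symm_apply]
  exact ⟨⟨gf, gi, left, right⟩, fun x => ((key1 x).symm), fun x => ((key2 x).symm)⟩





section
variable {β : Type*} [Fintype β] [DecidableEq β]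

/-- The event that all of `P` comes before all of `Q` in the order `p`. -/
def Ebefore (P Q : Finset β) (p : β ≃ Fin (Fintype.card β)) : Prop :=
  ∀ x y, x ∈ P → y ∈ Q → p x < p y

noncomputable def EV (P Q : Finset β) : Finset (β ≃ Fin (Fintype.card β)) :=
  @Finset.filter _ (Ebefore P Q) (fun _ => Classical.dec _) Finset.univ

lemma mem_EV {P Q : Finset β} {p : β ≃ Fin (Fintype.card β)} :
    p ∈ EV P Q ↔ Ebefore P Q p := by
  rw [EV, @Finset.mem_filter _ _ (fun _ => Classical.dec _)]
  simp

lemma card_EV_glue {P Q P' Q' : Finset β}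
    (hPQ : Disjoint P Q) (hPQ' : Disjoint P' Q')
    (hP : P.card = P'.card) (hQ : Q.card = Q'.card) :
    (EV P Q).card = (EV P' Q').card := by
  obtain ⟨g, hg1, hg2⟩ := exists_glue P Q P' Q' hPQ hPQ' hP hQ
  apply Finset.card_bij' (fun p _ => g.symm.trans p) (fun p _ => g.trans p)
  · intro p hp
    rw [mem_EV] at hp ⊢
    intro x y hx hy
    exact hp _ _ ((hg1 _).mpr (by rwa [Equiv.apply_symm_apply]))
      ((hg2 _).mpr (by rwa [Equiv.apply_symm_apply]))
  · intro p hp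
    rw [mem_EV] at hp ⊢
    intro x y hx hy
    exact hp _ _ ((hg1 x).mp hx) ((hg2 y).mp hy)
  · intro p _; ext x; simp
  · intro p _; ext x; simp

lemma EV_partition (a : ℕ) (C : Finset β) (ha : a ≤ C.card) :
    (Finset.univ : Finset (β ≃ Fin (Fintype.card β))) =
      (C.powersetCard a).biUnion (fun T => EV T (C \ T)) := by
  apply Finset.eq_of_subset_of_card_le ?sub ?le
  case sub =>
    intro p _
    rw [Finset.mem_biUnion]
    obtain ⟨t, hts, htc, hlt⟩ := exists_initial_seg (C.image p) a (by
      rwa [Finset.card_image_of_injective _ p.injective])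
    refine ⟨C.filter (fun x => p x ∈ t), ?_, ?_⟩
    · rw [Finset.mem_powersetCard]
      constructor
      · exact Finset.filter_subset _ _
      · have himg : (C.filter (fun x => p x ∈ t)).image p = t := by
          apply Finset.Subset.antisymm
          · intro v hv
            rw [Finset.mem_image] at hv
            obtain ⟨x, hx, rfl⟩ := hv
            exact (Finset.mem_filter.mp hx).2
          · intro v hv
            have hv' : v ∈ C.image p := hts hv
            rw [Finset.mem_image] at hv'
            obtain ⟨x, hx, rfl⟩ := hv'
            exact Finset.mem_image_of_mem p (Finset.mem_filter.mpr ⟨hx, hv⟩)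
        have := Finset.card_image_of_injective (C.filter (fun x => p x ∈ t)) p.injective
        rw [himg] at this
        omega
    · rw [mem_EV]
      intro x y hx hy
      have hx' : p x ∈ t := (Finset.mem_filter.mp hx).2
      have hy' : p y ∈ C.image p \ t := by
        rw [Finset.mem_sdiff]
        rw [Finset.mem_sdiff] at hy
        refine ⟨Finset.mem_image_of_mem p hy.1, fun h => hy.2 (Finset.mem_filter.mpr ⟨hy.1, h⟩)⟩
      exact hlt _ hx' _ hy'
  case le => exact Finset.card_le_card (Finset.subset_univ _)

lemma EV_pairwise_disjoint (a : ℕ) (C : Finset β) :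
    (C.powersetCard a : Set (Finset β)).PairwiseDisjoint (fun T => EV T (C \ T)) := by
  intro T hT T' hT' hne
  rw [Finset.mem_coe, Finset.mem_powersetCard] at hT hT'
  rw [Function.onFun, Finset.disjoint_left]
  intro p hp hp'
  rw [mem_EV] at hp hp'
  have h1 : ∃ x, x ∈ T ∧ x ∉ T' := by
    by_contra h
    push_neg at h
    exact hne (Finset.eq_of_subset_of_card_le h (by omega))
  have h2 : ∃ y, y ∈ T' ∧ y ∉ T := by
    by_contra h
    push_neg at h
    exact hne (Finset.eq_of_subset_of_card_le h (by omega)).symm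
  obtain ⟨x, hxT, hxT'⟩ := h1
  obtain ⟨y, hyT', hyT⟩ := h2
  have l1 : p x < p y := hp x y hxT (Finset.mem_sdiff.mpr ⟨hT'.1 hyT', hyT⟩)
  have l2 : p y < p x := hp' y x hyT' (Finset.mem_sdiff.mpr ⟨hT.1 hxT, hxT'⟩)
  exact absurd (l1.trans l2) (lt_irrefl _)

lemma count_main (a b : ℕ) (C : Finset β) (hC : C.card = a + b)
    (P Q : Finset β) (hPQ : Disjoint P Q) (hP : P.card = a) (hQ : Q.card = b) :
    (Finset.univ : Finset (β ≃ Fin (Fintype.card β))).card =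
      (a + b).choose a * (EV P Q).card := by
  rw [EV_partition a C (by omega)]
  rw [Finset.card_biUnion (by
    intro T hT T' hT' hne
    exact EV_pairwise_disjoint a C (Finset.mem_coe.mpr hT) (Finset.mem_coe.mpr hT') hne)]
  rw [Finset.sum_congr rfl (fun T hT => ?_), Finset.sum_const, Finset.card_powersetCard, hC,
    smul_eq_mul]
  rw [Finset.mem_powersetCard] at hT
  exact card_EV_glue (Finset.disjoint_sdiff) hPQ (by omega)
    (by rw [Finset.card_sdiff_of_subset hT.1]; omega)

end





section
variable {β : Type*} [Fintype β] [DecidableEq β]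

lemma swap_step {P Q : Finset β} (hd : Disjoint P Q)
    (p : β ≃ Fin (Fintype.card β)) (u v : β) (huv : p u < p v)
    (hbet : ∀ x, ¬(p u < p x ∧ p x < p v))
    (hq : Ebefore P Q (p.trans (Equiv.swap (p u) (p v))))
    (hnp : ¬ Ebefore P Q p) :
    v ∈ P ∧ u ∈ Q ∧ ∀ x ∈ P, x ≠ v → p x < p u := by
  have hne : u ≠ v := fun h => absurd huv (by rw [h]; exact lt_irrefl _)
  have hqu : (p.trans (Equiv.swap (p u) (p v))) u = p v := by
    simp [Equiv.swap_apply_left]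
  have hqv : (p.trans (Equiv.swap (p u) (p v))) v = p u := by
    simp [Equiv.swap_apply_right]
  have hqz : ∀ z, z ≠ u → z ≠ v → (p.trans (Equiv.swap (p u) (p v))) z = p z := by
    intro z h1 h2
    simp only [Equiv.trans_apply]
    exact Equiv.swap_apply_of_ne_of_ne (fun h => h1 (p.injective h)) (fun h => h2 (p.injective h))
  -- find a violating pair for p
  rw [Ebefore] at hnp
  push_neg at hnp
  obtain ⟨x, y, hx, hy, hxy⟩ := hnp
  have hxyne : x ≠ y := fun h => (Finset.disjoint_left.mp hd hx) (h ▸ hy)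
  have hyx : p y < p x :=
    lt_of_le_of_ne hxy (fun h => hxyne (p.injective h.symm))
  have main : v ∈ P ∧ u ∈ Q := by
    by_cases hxu : x = u
    · by_cases hyv : y = v
      · exact absurd (hq x y hx hy)
          (by rw [hxu, hyv, hqu, hqv]; exact not_lt.mpr (le_of_lt huv))
      · have hyu : y ≠ u := by rw [← hxu]; exact hxyne.symm
        have h1 := hq x y hx hy
        rw [hxu, hqu, hqz y hyu hyv] at h1
        have h2 : p y < p u := by rw [← hxu]; exact hyx
        exact absurd ((h1.trans h2).trans huv) (lt_irrefl _)
    · by_cases hxv : x = v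
      · by_cases hyu : y = u
        · exact ⟨hxv ▸ hx, hyu ▸ hy⟩
        · have hyv : y ≠ v := by rw [← hxv]; exact hxyne.symm
          have h1 := hq x y hx hy
          rw [hxv, hqv, hqz y hyu hyv] at h1
          have h2 : p y < p v := by rw [← hxv]; exact hyx
          exact absurd ⟨h1, h2⟩ (hbet y)
      · by_cases hyu : y = u
        · have h1 := hq x y hx hy
          rw [hyu, hqu, hqz x hxu hxv] at h1
          have h2 : p u < p x := by rw [← hyu]; exact hyx
          exact absurd ⟨h2, h1⟩ (hbet x)
        · by_cases hyv : y = v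
          · have h1 := hq x y hx hy
            rw [hyv, hqv, hqz x hxu hxv] at h1
            have h2 : p v < p x := by rw [← hyv]; exact hyx
            exact absurd (huv.trans (h2.trans h1)) (lt_irrefl _)
          · have h1 := hq x y hx hy
            rw [hqz x hxu hxv, hqz y hyu hyv] at h1
            exact absurd (h1.trans hyx) (lt_irrefl _)
  refine ⟨main.1, main.2, ?_⟩
  intro z hz hzv
  have hzu : z ≠ u := fun h => (Finset.disjoint_left.mp hd hz) (h ▸ main.2)
  have := hq z u hz main.2
  rw [hqu, hqz z hzu hzv] at this
  rcases lt_trichotomy (p z) (p u) with h | h | h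
  · exact h
  · exact absurd (p.injective h) hzu
  · exact absurd ⟨h, this⟩ (hbet z)

end




section
variable {β : Type*} [Fintype β] [DecidableEq β]

lemma exchange {M : ℕ} (LA LB : Fin M → Finset β)
    (hdisjL : ∀ i, Disjoint (LA i) (LB i))
    (hcrossL : ∀ k i, k ≠ i → ∃ z, z ∈ LA k ∧ z ∈ LB i)
    (hcard : ∀ i j, (LA i).card = (LA j).card ∧ (LB i).card = (LB j).card)
    (Pt : ∀ p : β ≃ Fin (Fintype.card β), ∃! i, Ebefore (LA i) (LB i) p)
    (i : Fin M) (u v : β) (hu : u ∈ LA i) (hv : v ∈ LB i) :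
    ∃ i', LA i' = insert v ((LA i).erase u) ∧ LB i' = insert u ((LB i).erase v) := by
  classical
  have huv : u ≠ v := fun h => (Finset.disjoint_left.mp (hdisjL i) hu) (h ▸ hv)
  have hvA : v ∉ LA i := Finset.disjoint_right.mp (hdisjL i) hv
  have huB : u ∉ LB i := Finset.disjoint_left.mp (hdisjL i) hu
  -- the first order
  set w1 : β → ℕ := fun x =>
    if x ∈ (LA i).erase u then 0 else if x = u then 1 else if x = v then 2
    else if x ∈ LB i then 3 else 4 with hw1
  obtain ⟨p1, hp1⟩ := exists_mono_equiv w1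
  have w1_0 : ∀ x, x ≠ u → x ∈ LA i → w1 x = 0 := by
    intro x h1 h2; simp [hw1, Finset.mem_erase, h1, h2]
  have w1u : w1 u = 1 := by simp [hw1]
  have w1v : w1 v = 2 := by simp [hw1, Finset.mem_erase, hvA, (Ne.symm huv)]
  have w1_3 : ∀ x, x ≠ v → x ∈ LB i → w1 x = 3 := by
    intro x h1 h2
    have h3 : x ∉ LA i := Finset.disjoint_right.mp (hdisjL i) h2
    have h4 : x ≠ u := fun h => huB (h ▸ h2)
    simp [hw1, Finset.mem_erase, h1, h2, h3, h4]
  have w1_4 : ∀ x, x ≠ u → x ≠ v → x ∉ LA i → x ∉ LB i → w1 x = 4 := by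
    intro x h1 h2 h3 h4; simp [hw1, Finset.mem_erase, h1, h2, h3, h4]
  have w1A : ∀ x ∈ LA i, w1 x ≤ 1 := by
    intro x hx
    by_cases hxu : x = u
    · rw [hxu, w1u]
    · rw [w1_0 x hxu hx]; omega
  have w1B : ∀ y ∈ LB i, 2 ≤ w1 y := by
    intro y hy
    by_cases h3 : y = v
    · rw [h3, w1v]
    · rw [w1_3 y h3 hy]; omega
  have E1 : Ebefore (LA i) (LB i) p1 := by
    intro x y hx hy
    exact hp1 x y (lt_of_le_of_lt (w1A x hx) (lt_of_lt_of_le (by norm_num) (w1B y hy)))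
  have hp1uv : p1 u < p1 v := hp1 u v (by rw [w1u, w1v]; norm_num)
  have hbet1 : ∀ x, ¬(p1 u < p1 x ∧ p1 x < p1 v) := by
    rintro x ⟨h1, h2⟩
    by_cases hxu : x = u
    · exact absurd (hxu ▸ h1) (lt_irrefl _)
    by_cases hxv : x = v
    · exact absurd (hxv ▸ h2) (lt_irrefl _)
    by_cases hA : x ∈ LA i
    · exact absurd (h1.trans (hp1 x u (by rw [w1_0 x hxu hA, w1u]; norm_num))) (lt_irrefl _)
    by_cases hB : x ∈ LB i
    · exact absurd (h2.trans (hp1 v x (by rw [w1v, w1_3 x hxv hB]; norm_num))) (lt_irrefl _)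
    · exact absurd (h2.trans (hp1 v x (by rw [w1v, w1_4 x hxu hxv hA hB]; norm_num))) (lt_irrefl _)
  -- unique indices
  obtain ⟨iq, hiq, hiquniq⟩ := Pt (p1.trans (Equiv.swap (p1 u) (p1 v)))
  obtain ⟨ip, hip, hipuniq⟩ := Pt p1
  have hip_eq : i = ip := hipuniq i E1
  have hiq_ne : iq ≠ i := by
    intro h
    have := hiq u v (h ▸ hu) (h ▸ hv)
    simp only [Equiv.trans_apply, Equiv.swap_apply_left, Equiv.swap_apply_right] at this
    exact absurd (hp1uv.trans this) (lt_irrefl _)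
  have hnq : ¬ Ebefore (LA iq) (LB iq) p1 := by
    intro h
    exact hiq_ne ((hipuniq iq h).trans hip_eq.symm)
  obtain ⟨hv_iq, hu_iq, hlast⟩ := swap_step (hdisjL iq) p1 u v hp1uv hbet1 hiq hnq
  -- pin down LA iq
  have hAsub : LA iq ⊆ insert v ((LA i).erase u) := by
    intro x hx
    by_cases hxv : x = v
    · rw [hxv]; exact Finset.mem_insert_self v _
    · have hplt := hlast x hx hxv
      have h1 : ¬ (w1 u < w1 x) := fun h => absurd (hplt.trans (hp1 u x h)) (lt_irrefl _)
      rw [w1u] at h1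
      have hxu : x ≠ u := fun h =>
        (Finset.disjoint_left.mp (hdisjL iq) hx) (h ▸ hu_iq)
      apply Finset.mem_insert_of_mem
      rw [Finset.mem_erase]
      refine ⟨hxu, ?_⟩
      by_contra hA
      by_cases hB : x ∈ LB i
      · rw [w1_3 x hxv hB] at h1; omega
      · rw [w1_4 x hxu hxv hA hB] at h1; omega
  have hAcard : (insert v ((LA i).erase u)).card = (LA iq).card := by
    rw [Finset.card_insert_of_notMem (fun h => hvA (Finset.mem_of_mem_erase h)),
      Finset.card_erase_of_mem hu]
    have h1 := (hcard iq i).1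
    have : 1 ≤ (LA i).card := Finset.card_pos.mpr ⟨u, hu⟩
    omega
  have hAeq : LA iq = insert v ((LA i).erase u) :=
    Finset.eq_of_subset_of_card_le hAsub (le_of_eq hAcard)
  -- now pin down LB iq
  have hBsub : LB iq ⊆ insert u ((LB i).erase v) := by
    intro z hz
    have hzA : z ∉ LA iq := Finset.disjoint_right.mp (hdisjL iq) hz
    rw [hAeq] at hzA
    have hzv : z ≠ v := fun h => hzA (by rw [h]; exact Finset.mem_insert_self v _)
    have hzAi : z ∉ (LA i).erase u := fun h => hzA (Finset.mem_insert_of_mem h)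
    by_cases hzu : z = u
    · rw [hzu]; exact Finset.mem_insert_self u _
    have hzLAi : z ∉ LA i := fun h => hzAi (Finset.mem_erase.mpr ⟨hzu, h⟩)
    by_cases hzB : z ∈ LB i
    · exact Finset.mem_insert_of_mem (Finset.mem_erase.mpr ⟨hzv, hzB⟩)
    -- junk case: derive a contradiction
    exfalso
    set w3 : β → ℕ := fun x =>
      if x ∈ (LA i).erase u then 0 else if x = v then 1 else if x = z then 2
      else if x = u then 3 else if x ∈ LB i then 4 else 5 with hw3
    obtain ⟨p3, hp3⟩ := exists_mono_equiv w3
    have w3_0 : ∀ x, x ∈ (LA i).erase u → w3 x = 0 := by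
      intro x h1; simp only [hw3]; rw [if_pos h1]
    have w3v : w3 v = 1 := by
      simp only [hw3]
      rw [if_neg (fun h => hvA (Finset.mem_of_mem_erase h))]
      simp
    have w3z : w3 z = 2 := by
      simp only [hw3]
      rw [if_neg hzAi, if_neg hzv]
      simp
    have w3u : w3 u = 3 := by
      simp only [hw3]
      rw [if_neg (Finset.notMem_erase u (LA i)), if_neg huv,
        if_neg (fun h => hzu (h.symm) : ¬ u = z)]
      simp
    have w3_4 : ∀ x, x ∉ (LA i).erase u → x ≠ v → x ≠ z → x ≠ u → x ∈ LB i → w3 x = 4 := by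
      intro x h1 h2 h3 h4 h5
      simp only [hw3]
      rw [if_neg h1, if_neg h2, if_neg h3, if_neg h4, if_pos h5]
    have w3_5 : ∀ x, x ∉ (LA i).erase u → x ≠ v → x ≠ z → x ≠ u → x ∉ LB i → w3 x = 5 := by
      intro x h1 h2 h3 h4 h5
      simp only [hw3]
      rw [if_neg h1, if_neg h2, if_neg h3, if_neg h4, if_neg h5]
    have w3big : ∀ x, x ∉ (LA i).erase u → x ≠ v → x ≠ z → 3 ≤ w3 x := by
      intro x h1 h2 h3
      by_cases h4 : x = u
      · rw [h4, w3u]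
      by_cases h5 : x ∈ LB i
      · rw [w3_4 x h1 h2 h3 h4 h5]; omega
      · rw [w3_5 x h1 h2 h3 h4 h5]; omega
    have w3Aiq : ∀ x ∈ LA iq, w3 x ≤ 1 := by
      intro x hx
      rw [hAeq] at hx
      rcases Finset.mem_insert.mp hx with h | h
      · rw [h, w3v]
      · rw [w3_0 x h]; omega
    have w3Biq : ∀ y ∈ LB iq, 2 ≤ w3 y := by
      intro y hy
      have hyA : y ∉ LA iq := Finset.disjoint_right.mp (hdisjL iq) hy
      rw [hAeq] at hyA
      have hyv : y ≠ v := fun h => hyA (by rw [h]; exact Finset.mem_insert_self v _)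
      have hyAi : y ∉ (LA i).erase u := fun h => hyA (Finset.mem_insert_of_mem h)
      by_cases hyz : y = z
      · rw [hyz, w3z]
      · have := w3big y hyAi hyv hyz; omega
    have E3 : Ebefore (LA iq) (LB iq) p3 := by
      intro x y hx hy
      exact hp3 x y (lt_of_le_of_lt (w3Aiq x hx) (lt_of_lt_of_le (by norm_num) (w3Biq y hy)))
    have hp3vz : p3 v < p3 z := hp3 v z (by rw [w3v, w3z]; norm_num)
    have hbet3 : ∀ x, ¬(p3 v < p3 x ∧ p3 x < p3 z) := by
      rintro x ⟨h1, h2⟩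
      by_cases hxv : x = v
      · exact absurd (hxv ▸ h1) (lt_irrefl _)
      by_cases hxz : x = z
      · exact absurd (hxz ▸ h2) (lt_irrefl _)
      by_cases hh : x ∈ (LA i).erase u
      · exact absurd (h1.trans (hp3 x v (by rw [w3_0 x hh, w3v]; norm_num))) (lt_irrefl _)
      · have := w3big x hh hxv hxz
        exact absurd (h2.trans (hp3 z x (by rw [w3z]; omega))) (lt_irrefl _)
    obtain ⟨k, hk, hkuniq⟩ := Pt (p3.trans (Equiv.swap (p3 v) (p3 z)))
    obtain ⟨k0, hk0, hk0uniq⟩ := Pt p3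
    have hk0_eq : iq = k0 := hk0uniq iq E3
    have hk_ne : k ≠ iq := by
      intro h
      have := hk v z (h ▸ hv_iq) (h ▸ hz)
      simp only [Equiv.trans_apply, Equiv.swap_apply_left, Equiv.swap_apply_right] at this
      exact absurd (hp3vz.trans this) (lt_irrefl _)
    have hnq3 : ¬ Ebefore (LA k) (LB k) p3 := by
      intro h
      exact hk_ne ((hk0uniq k h).trans hk0_eq.symm)
    obtain ⟨hz_k, hv_k, hlast3⟩ := swap_step (hdisjL k) p3 v z hp3vz hbet3 hk hnq3
    -- pin down LA k enough
    have hAk : LA k ⊆ insert z ((LA i).erase u) := by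
      intro x hx
      by_cases hxz : x = z
      · rw [hxz]; exact Finset.mem_insert_self z _
      · have hplt := hlast3 x hx hxz
        have h1 : ¬ (w3 v < w3 x) := fun h => absurd (hplt.trans (hp3 v x h)) (lt_irrefl _)
        rw [w3v] at h1
        have hxv : x ≠ v := fun h =>
          (Finset.disjoint_left.mp (hdisjL k) hx) (h ▸ hv_k)
        apply Finset.mem_insert_of_mem
        by_contra hh
        have := w3big x hh hxv hxz
        omega
    have hk_ne_i : k ≠ i := by
      intro h
      exact hzLAi (h ▸ hz_k)
    obtain ⟨y, hy1, hy2⟩ := hcrossL k i hk_ne_i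
    rcases Finset.mem_insert.mp (hAk hy1) with h | hy3
    · exact hzB (h ▸ hy2)
    · exact (Finset.disjoint_left.mp (hdisjL i) (Finset.mem_of_mem_erase hy3)) hy2
  have hBcard : (insert u ((LB i).erase v)).card = (LB iq).card := by
    rw [Finset.card_insert_of_notMem (fun h => huB (Finset.mem_of_mem_erase h)),
      Finset.card_erase_of_mem hv]
    have h1 := (hcard iq i).2
    have : 1 ≤ (LB i).card := Finset.card_pos.mpr ⟨v, hv⟩
    omega
  exact ⟨iq, hAeq, Finset.eq_of_subset_of_card_le hBsub (le_of_eq hBcard)⟩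

end


end Bollobas


namespace Bollobas

lemma card_lift {α : Type*} [DecidableEq α] {X s : Finset α} (h : s ⊆ X) :
    (Finset.univ.filter (fun x : {y // y ∈ X} => ↑x ∈ s)).card = s.card := by
  apply Finset.card_bij (fun (x : {y // y ∈ X}) _ => (x : α))
  · intro x hx
    exact (Finset.mem_filter.mp hx).2
  · intro x _ y _ hxy
    exact Subtype.ext hxy
  · intro y hy
    exact ⟨⟨y, h hy⟩, Finset.mem_filter.mpr ⟨Finset.mem_univ _, hy⟩, rfl⟩

lemma lift_eq {α : Type*} [DecidableEq α] {X s t : Finset α} (hs : s ⊆ X) (ht : t ⊆ X)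
    (h : Finset.univ.filter (fun x : {y // y ∈ X} => ↑x ∈ s)
       = Finset.univ.filter (fun x : {y // y ∈ X} => ↑x ∈ t)) : s = t := by
  ext y
  constructor
  · intro hy
    have : (⟨y, hs hy⟩ : {y // y ∈ X}) ∈ Finset.univ.filter (fun x : {y // y ∈ X} => ↑x ∈ s) :=
      Finset.mem_filter.mpr ⟨Finset.mem_univ _, hy⟩
    rw [h] at this
    exact (Finset.mem_filter.mp this).2
  · intro hy
    have : (⟨y, ht hy⟩ : {y // y ∈ X}) ∈ Finset.univ.filter (fun x : {y // y ∈ X} => ↑x ∈ t) :=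
      Finset.mem_filter.mpr ⟨Finset.mem_univ _, hy⟩
    rw [← h] at this
    exact (Finset.mem_filter.mp this).2

end Bollobas

open Bollobas in
theorem bollobas_set_pairs {α : Type*} [DecidableEq α] (m a b : ℕ)
    (A B : Fin m → Finset α)
    (hA : ∀ i, (A i).card = a) (hB : ∀ i, (B i).card = b)
    (hdisj : ∀ i, Disjoint (A i) (B i))
    (hcross : ∀ i j, i ≠ j → ¬ Disjoint (A i) (B j)) :
    m ≤ (a + b).choose a ∧
    (m = (a + b).choose a → ∃ S : Finset α, S.card = a + b ∧
      (∀ i, A i ⊆ S ∧ B i = S \ A i) ∧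
      ∀ T ⊆ S, T.card = a → ∃ i, A i = T) := by
  classical
  rcases Nat.eq_zero_or_pos m with hm0 | hmpos
  · subst hm0
    refine ⟨Nat.zero_le _, fun h => absurd h ?_⟩
    have := Nat.choose_pos (Nat.le_add_right a b)
    omega
  set X : Finset α := Finset.univ.biUnion (fun i => A i ∪ B i) with hX
  have hAX : ∀ i, A i ⊆ X := by
    intro i x hx
    exact Finset.mem_biUnion.mpr ⟨i, Finset.mem_univ i, Finset.mem_union_left _ hx⟩
  have hBX : ∀ i, B i ⊆ X := by
    intro i x hx
    exact Finset.mem_biUnion.mpr ⟨i, Finset.mem_univ i, Finset.mem_union_right _ hx⟩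
  set LA : Fin m → Finset {y // y ∈ X} :=
    fun i => Finset.univ.filter (fun x => ↑x ∈ A i) with hLA
  set LB : Fin m → Finset {y // y ∈ X} :=
    fun i => Finset.univ.filter (fun x => ↑x ∈ B i) with hLB
  have memLA : ∀ i (x : {y // y ∈ X}), x ∈ LA i ↔ ↑x ∈ A i := by
    intro i x; rw [hLA]; simp
  have memLB : ∀ i (x : {y // y ∈ X}), x ∈ LB i ↔ ↑x ∈ B i := by
    intro i x; rw [hLB]; simp
  have hLAcard : ∀ i, (LA i).card = a := fun i => by rw [hLA]; rw [card_lift (hAX i), hA i]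
  have hLBcard : ∀ i, (LB i).card = b := fun i => by rw [hLB]; rw [card_lift (hBX i), hB i]
  have hdisjL : ∀ i, Disjoint (LA i) (LB i) := by
    intro i
    rw [Finset.disjoint_left]
    intro x hx hx2
    exact Finset.disjoint_left.mp (hdisj i) ((memLA i x).mp hx) ((memLB i x).mp hx2)
  have hcrossL : ∀ k i, k ≠ i → ∃ z : {y // y ∈ X}, z ∈ LA k ∧ z ∈ LB i := by
    intro k i hki
    obtain ⟨y, h1, h2⟩ := Finset.not_disjoint_iff.mp (hcross k i hki)
    exact ⟨⟨y, hAX k h1⟩, (memLA k _).mpr h1, (memLB i _).mpr h2⟩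
  set i0 : Fin m := ⟨0, hmpos⟩ with hi0
  -- counting
  have hEVdisj : ∀ i j : Fin m, i ≠ j →
      Disjoint (EV (LA i) (LB i)) (EV (LA j) (LB j)) := by
    intro i j hij
    rw [Finset.disjoint_left]
    intro p hp hp2
    rw [mem_EV] at hp hp2
    obtain ⟨x, hx1, hx2⟩ := hcrossL i j hij
    obtain ⟨y, hy1, hy2⟩ := hcrossL j i hij.symm
    exact absurd ((hp x y hx1 hy2).trans (hp2 y x hy1 hx2)) (lt_irrefl _)
  have hN : ∀ i, (EV (LA i) (LB i)).card = (EV (LA i0) (LB i0)).card := by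
    intro i
    exact card_EV_glue (hdisjL i) (hdisjL i0)
      (by rw [hLAcard, hLAcard]) (by rw [hLBcard, hLBcard])
  have hCcard : (LA i0 ∪ LB i0).card = a + b := by
    rw [Finset.card_union_of_disjoint (hdisjL i0), hLAcard, hLBcard]
  have hcount : (Finset.univ :
        Finset ({y // y ∈ X} ≃ Fin (Fintype.card {y // y ∈ X}))).card =
      (a + b).choose a * (EV (LA i0) (LB i0)).card :=
    count_main a b (LA i0 ∪ LB i0) hCcard (LA i0) (LB i0) (hdisjL i0)
      (hLAcard i0) (hLBcard i0)
  have hsum : (Finset.univ.biUnion (fun i => EV (LA i) (LB i))).card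
      = m * (EV (LA i0) (LB i0)).card := by
    rw [Finset.card_biUnion (fun i _ j _ hij => hEVdisj i j hij)]
    rw [Finset.sum_congr rfl (fun i _ => hN i), Finset.sum_const, Finset.card_univ,
      Fintype.card_fin, smul_eq_mul]
  have hle : m * (EV (LA i0) (LB i0)).card ≤ (a + b).choose a * (EV (LA i0) (LB i0)).card := by
    rw [← hsum, ← hcount]
    exact Finset.card_le_card (Finset.subset_univ _)
  have hNpos : 0 < (EV (LA i0) (LB i0)).card := by
    by_contra h
    have h0 : (EV (LA i0) (LB i0)).card = 0 := by omega
    rw [h0, Nat.mul_zero] at hcount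
    have : (Fintype.equivFinOfCardEq (rfl : Fintype.card {y // y ∈ X} = _)) ∈
        (Finset.univ : Finset ({y // y ∈ X} ≃ Fin (Fintype.card {y // y ∈ X}))) :=
      Finset.mem_univ _
    have := Finset.card_pos.mpr ⟨_, this⟩
    omega
  refine ⟨Nat.le_of_mul_le_mul_right hle hNpos, ?_⟩
  intro heq
  -- the partition property
  have hUnivEq : Finset.univ.biUnion (fun i => EV (LA i) (LB i)) = Finset.univ := by
    apply Finset.eq_of_subset_of_card_le (Finset.subset_univ _)
    rw [hsum, hcount, heq]
  have Pt : ∀ p : {y // y ∈ X} ≃ Fin (Fintype.card {y // y ∈ X}),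
      ∃! i, Ebefore (LA i) (LB i) p := by
    intro p
    have hp : p ∈ Finset.univ.biUnion (fun i => EV (LA i) (LB i)) :=
      hUnivEq ▸ Finset.mem_univ p
    obtain ⟨i, _, hEv⟩ := Finset.mem_biUnion.mp hp
    refine ⟨i, mem_EV.mp hEv, ?_⟩
    intro j hj
    by_contra hne
    exact Finset.disjoint_left.mp (hEVdisj j i hne) (mem_EV.mpr hj) hEv
  have hcardL : ∀ i j, (LA i).card = (LA j).card ∧ (LB i).card = (LB j).card :=
    fun i j => ⟨by rw [hLAcard, hLAcard], by rw [hLBcard, hLBcard]⟩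
  -- main claim, by induction on the distance from LA i0
  have main : ∀ k (LT : Finset {y // y ∈ X}), LT ⊆ LA i0 ∪ LB i0 → LT.card = a →
      (LT \ LA i0).card ≤ k →
      ∃ i, LA i = LT ∧ LB i = (LA i0 ∪ LB i0) \ LT := by
    intro k
    induction k with
    | zero =>
      intro LT hsub hcard hdk
      have h0 : LT \ LA i0 = ∅ := Finset.card_eq_zero.mp (by omega)
      have hsub2 : LT ⊆ LA i0 := by
        intro x hx
        by_contra hxn
        exact absurd (h0 ▸ Finset.mem_sdiff.mpr ⟨hx, hxn⟩) (Finset.notMem_empty x)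
      have hLTeq : LT = LA i0 :=
        Finset.eq_of_subset_of_card_le hsub2 (by rw [hLAcard i0, hcard])
      refine ⟨i0, hLTeq.symm, ?_⟩
      rw [hLTeq]
      ext x
      rw [Finset.mem_sdiff, Finset.mem_union]
      constructor
      · intro hx
        exact ⟨Or.inr hx, Finset.disjoint_right.mp (hdisjL i0) hx⟩
      · rintro ⟨h1 | h1, h2⟩
        · exact absurd h1 h2
        · exact h1
    | succ k ih =>
      intro LT hsub hcardT hdk
      by_cases hk : (LT \ LA i0).card ≤ k
      · exact ih LT hsub hcardT hk
      have hdk1 : (LT \ LA i0).card = k + 1 := by omega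
      obtain ⟨v, hv⟩ : (LT \ LA i0).Nonempty := Finset.card_pos.mp (by omega)
      have hvT : v ∈ LT := (Finset.mem_sdiff.mp hv).1
      have hvA0 : v ∉ LA i0 := (Finset.mem_sdiff.mp hv).2
      obtain ⟨u, hu'⟩ : (LA i0 \ LT).Nonempty := by
        rw [← Finset.card_pos, Finset.card_sdiff_comm (by rw [hLAcard i0, hcardT])]
        omega
      have hu : u ∈ LA i0 := (Finset.mem_sdiff.mp hu').1
      have huT : u ∉ LT := (Finset.mem_sdiff.mp hu').2
      have huv : u ≠ v := fun h => huT (h ▸ hvT)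
      set T' : Finset {y // y ∈ X} := insert u (LT.erase v) with hT'
      have hT'sub : T' ⊆ LA i0 ∪ LB i0 :=
        Finset.insert_subset (Finset.mem_union_left _ hu)
          ((Finset.erase_subset _ _).trans hsub)
      have huE : u ∉ LT.erase v := fun h => huT (Finset.mem_of_mem_erase h)
      have hcT' : T'.card = a := by
        rw [hT', Finset.card_insert_of_notMem huE, Finset.card_erase_of_mem hvT]
        have : 1 ≤ LT.card := Finset.card_pos.mpr ⟨v, hvT⟩
        omega
      have hT'd : (T' \ LA i0).card ≤ k := by
        have hEq : T' \ LA i0 = (LT \ LA i0).erase v := by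
          ext x
          rw [hT']
          simp only [Finset.mem_sdiff, Finset.mem_insert, Finset.mem_erase]
          constructor
          · rintro ⟨h1 | h1, h2⟩
            · exact absurd (by rw [h1]; exact hu) h2
            · exact ⟨h1.1, h1.2, h2⟩
          · rintro ⟨h1, h2, h3⟩
            exact ⟨Or.inr ⟨h1, h2⟩, h3⟩
        rw [hEq, Finset.card_erase_of_mem hv, hdk1]
        omega
      obtain ⟨j, hjA, hjB⟩ := ih T' hT'sub hcT' hT'd
      have huj : u ∈ LA j := by rw [hjA, hT']; exact Finset.mem_insert_self u _
      have hvj : v ∈ LB j := by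
        rw [hjB, Finset.mem_sdiff]
        refine ⟨hsub hvT, ?_⟩
        rw [hT']
        intro h
        rcases Finset.mem_insert.mp h with h | h
        · exact huv h.symm
        · exact (Finset.notMem_erase v LT) h
      obtain ⟨i', hA', hB'⟩ := exchange LA LB hdisjL hcrossL hcardL Pt j u v huj hvj
      refine ⟨i', ?_, ?_⟩
      · rw [hA', hjA, hT', Finset.erase_insert huE]
        exact Finset.insert_erase hvT
      · rw [hB', hjB]
        ext x
        simp only [Finset.mem_insert, Finset.mem_erase, Finset.mem_sdiff, hT']
        constructor
        · rintro (rfl | ⟨hxv, ⟨hxLS, hxn⟩⟩)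
          · exact ⟨Finset.mem_union_left _ hu, huT⟩
          · exact ⟨hxLS, fun h => hxn (Or.inr ⟨hxv, h⟩)⟩
        · rintro ⟨hxLS, hxT⟩
          by_cases hxu : x = u
          · exact Or.inl hxu
          · refine Or.inr ⟨fun h => hxT (by rw [h]; exact hvT), hxLS, fun h => ?_⟩
            rcases h with h | h
            · exact hxu h
            · exact hxT h.2
  -- descend to α
  set S : Finset α := A i0 ∪ B i0 with hS
  have hScard : S.card = a + b := by
    rw [hS, Finset.card_union_of_disjoint (hdisj i0), hA, hB]
  have hSX : S ⊆ X := by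
    rw [hS]; exact Finset.union_subset (hAX i0) (hBX i0)
  have hLSeq : Finset.univ.filter (fun x : {y // y ∈ X} => ↑x ∈ S) = LA i0 ∪ LB i0 := by
    ext x
    simp only [Finset.mem_filter, Finset.mem_univ, true_and, Finset.mem_union,
      memLA, memLB, hS, Finset.mem_union]
  have keyT : ∀ T, T ⊆ S → T.card = a → ∃ i, A i = T ∧ B i = S \ T := by
    intro T hTS hTc
    have hTX : T ⊆ X := hTS.trans hSX
    set LT : Finset {y // y ∈ X} := Finset.univ.filter (fun x => ↑x ∈ T) with hLT
    have hLTsub : LT ⊆ LA i0 ∪ LB i0 := by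
      rw [← hLSeq, hLT]
      intro x hx
      rw [Finset.mem_filter] at hx ⊢
      exact ⟨hx.1, hTS hx.2⟩
    have hLTcard : LT.card = a := by rw [hLT, card_lift hTX, hTc]
    obtain ⟨i, hiA, hiB⟩ := main (LT \ LA i0).card LT hLTsub hLTcard le_rfl
    refine ⟨i, ?_, ?_⟩
    · exact lift_eq (hAX i) hTX hiA
    · apply lift_eq (hBX i) ((Finset.sdiff_subset).trans hSX)
      have : Finset.univ.filter (fun x : {y // y ∈ X} => ↑x ∈ S \ T)
          = (LA i0 ∪ LB i0) \ LT := by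
        rw [← hLSeq, hLT]
        ext x
        simp only [Finset.mem_filter, Finset.mem_sdiff, Finset.mem_univ, true_and,
          Finset.mem_sdiff]
      rw [this]
      exact hiB
  have hAinj : Function.Injective A := by
    intro i j hij
    by_contra hne
    obtain ⟨x, hx1, hx2⟩ := Finset.not_disjoint_iff.mp (hcross i j hne)
    rw [hij] at hx1
    exact Finset.disjoint_left.mp (hdisj j) hx1 hx2
  have hPcard : (S.powersetCard a).card = m := by
    rw [Finset.card_powersetCard, hScard, ← heq]
  have hPsub : S.powersetCard a ⊆ Finset.univ.image A := by
    intro T hT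
    rw [Finset.mem_powersetCard] at hT
    obtain ⟨i, hi, _⟩ := keyT T hT.1 hT.2
    exact Finset.mem_image.mpr ⟨i, Finset.mem_univ i, hi⟩
  have himgcard : (Finset.univ.image A).card = m := by
    rw [Finset.card_image_of_injective _ hAinj, Finset.card_univ, Fintype.card_fin]
  have hPeq : S.powersetCard a = Finset.univ.image A :=
    Finset.eq_of_subset_of_card_le hPsub (by rw [himgcard, hPcard])
  refine ⟨S, hScard, ?_, fun T hT hTc => ⟨(keyT T hT hTc).choose, (keyT T hT hTc).choose_spec.1⟩⟩
  intro i
  have hAiP : A i ∈ S.powersetCard a := by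
    rw [hPeq]
    exact Finset.mem_image.mpr ⟨i, Finset.mem_univ i, rfl⟩
  rw [Finset.mem_powersetCard] at hAiP
  obtain ⟨j, hj1, hj2⟩ := keyT (A i) hAiP.1 (hA i)
  have : j = i := hAinj hj1
  rw [← this, hj1] at *
  exact ⟨hAiP.1, by rw [← hj1]; exact hj2⟩
end

section
/- For every r ≥ 2 and every n ≥ 2r, every maximum induced matching in the Kneser graph KG(n,r) has exactly (1/2)·C(2r,r) edges, and its vertex set is the collection of all r-subsets of some fixed 2r-element set S ⊆ [n]. -/
/-!
Orient every edge of an induced matching `M` both ways. The resulting `2 * #M` ordered pairs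
`(A, B)` of disjoint `r`-sets meet crosswise (`A ∩ B' ≠ ∅` for distinct pairs), i.e. they form a
Bollobás set-pair system, so `2 * #M ≤ C(2r, r)` by Lubell's argument: a linear ordering of the
ground set puts all of `A` before all of `B` for at most one pair, and it does so for exactly a
`1 / C(2r, r)` fraction of the orderings. The perfect matching of `KG(2r, r)` attains the bound.

In the equality case every ordering separates some pair. Ordering the ground set as
`A \ {a}, b, a, …` shows that `(A - a + b, B - b + a)` is again a pair, and such exchanges reach
every `r`-subset of `A ∪ B`.
-/

/-- An induced matching in the Kneser graph `KG(n,r)`: a set of edges, given as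
ordered pairs of disjoint `r`-subsets of `[n]`, such that distinct edges share no
endpoint and no edge of the graph joins endpoints of two distinct matching edges
(i.e. all cross pairs of endpoints intersect). -/
def IsInducedMatching (n r : ℕ) (M : Finset (Finset ℕ × Finset ℕ)) : Prop :=
  (∀ e ∈ M, (e.1 ⊆ Finset.range n ∧ e.1.card = r) ∧
    (e.2 ⊆ Finset.range n ∧ e.2.card = r) ∧ Disjoint e.1 e.2) ∧
  (∀ e ∈ M, ∀ e' ∈ M, e ≠ e' →
    e.1 ≠ e'.1 ∧ e.1 ≠ e'.2 ∧ e.2 ≠ e'.1 ∧ e.2 ≠ e'.2 ∧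
    ¬ Disjoint e.1 e'.1 ∧ ¬ Disjoint e.1 e'.2 ∧
    ¬ Disjoint e.2 e'.1 ∧ ¬ Disjoint e.2 e'.2)

open Finset

variable {α β : Type*}

def Separates [LT β] (f : α → β) (p : Finset α × Finset α) : Prop :=
  ∀ a ∈ p.1, ∀ b ∈ p.2, f a < f b

instance [LinearOrder β] (f : α → β) (p : Finset α × Finset α) : Decidable (Separates f p) := by
  unfold Separates; infer_instance

lemma Separates.not_separates [Preorder β] {f : α → β} {p q : Finset α × Finset α}
    (hpq : ¬Disjoint p.1 q.2) (hqp : ¬Disjoint q.1 p.2) (hp : Separates f p) :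
    ¬Separates f q := fun hq => by
  obtain ⟨x, hxp, hxq⟩ := not_disjoint_iff.1 hpq
  obtain ⟨y, hyq, hyp⟩ := not_disjoint_iff.1 hqp
  exact lt_asymm (hp x hxp y hyp) (hq y hyq x hxq)

structure IsBollobasSystem (r : ℕ) (P : Finset (Finset α × Finset α)) : Prop where
  card_fst : ∀ p ∈ P, #p.1 = r
  card_snd : ∀ p ∈ P, #p.2 = r
  disjoint : ∀ p ∈ P, Disjoint p.1 p.2
  not_disjoint : ∀ p ∈ P, ∀ q ∈ P, p ≠ q → ¬Disjoint p.1 q.2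

lemma IsBollobasSystem.eq_of_fst_eq {r : ℕ} {P : Finset (Finset α × Finset α)}
    (hP : IsBollobasSystem r P) {p q : Finset α × Finset α} (hp : p ∈ P) (hq : q ∈ P)
    (h : p.1 = q.1) : p = q :=
  by_contra fun hne => hP.not_disjoint p hp q hq hne (h ▸ hP.disjoint q hq)

section Splits

variable [DecidableEq α] {S T T' : Finset α} {r : ℕ} {p : Finset α × Finset α}

def splits (S : Finset α) (r : ℕ) : Finset (Finset α × Finset α) :=
  (S.powersetCard r).image fun T => (T, S \ T)

lemma mem_splits : p ∈ splits S r ↔ p.1 ⊆ S ∧ #p.1 = r ∧ p.2 = S \ p.1 := by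
  obtain ⟨A, B⟩ := p
  simp only [splits, mem_image, mem_powersetCard, Prod.mk.injEq]
  constructor
  · rintro ⟨T, ⟨hTS, hT⟩, rfl, rfl⟩
    exact ⟨hTS, hT, rfl⟩
  · rintro ⟨hAS, hA, rfl⟩
    exact ⟨A, ⟨hAS, hA⟩, rfl, rfl⟩

lemma subset_of_mem_splits (hp : p ∈ splits S r) : p.1 ⊆ S ∧ p.2 ⊆ S := by
  obtain ⟨hpS, -, hp2⟩ := mem_splits.1 hp
  exact ⟨hpS, hp2 ▸ sdiff_subset⟩

lemma card_splits : #(splits S r) = (#S).choose r := by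
  rw [splits, card_image_of_injective _ fun T T' h => congrArg Prod.fst h, card_powersetCard]

lemma swap_mem_splits (hS : #S = 2 * r) (hp : p ∈ splits S r) : p.swap ∈ splits S r := by
  obtain ⟨A, B⟩ := p
  obtain ⟨hAS : A ⊆ S, hA : #A = r, rfl : B = S \ A⟩ := mem_splits.1 hp
  refine mem_splits.2 ⟨sdiff_subset, ?_, (Finset.sdiff_sdiff_eq_self hAS).symm⟩
  rw [Prod.fst_swap, card_sdiff_of_subset hAS, hS, hA]
  omega

lemma not_disjoint_sdiff_of_ne (hTS : T ⊆ S) (hT'S : T' ⊆ S) (hcard : #T = #T') (hne : T ≠ T') :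
    ¬Disjoint T (S \ T') := by
  rw [disjoint_sdiff_iff_le hTS hT'S]
  exact fun h => hne (eq_of_subset_of_card_le h hcard.ge)

lemma isBollobasSystem_splits (hS : #S = 2 * r) : IsBollobasSystem r (splits S r) where
  card_fst p hp := (mem_splits.1 hp).2.1
  card_snd p hp := (mem_splits.1 (swap_mem_splits hS hp)).2.1
  disjoint p hp := (mem_splits.1 hp).2.2 ▸ disjoint_sdiff
  not_disjoint p hp q hq hne := by
    obtain ⟨hpS, hp1, hp2⟩ := mem_splits.1 hp
    obtain ⟨hqS, hq1, hq2⟩ := mem_splits.1 hq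
    rw [hq2]
    exact not_disjoint_sdiff_of_ne hpS hqS (hp1.trans hq1.symm) fun h =>
      hne (Prod.ext h (by rw [hp2, hq2, h]))

end Splits

theorem Finset.induction_on_exchange [DecidableEq α] {S : Finset α} {Q : Finset α → Prop}
    (hQ : ∀ A ⊆ S, Q A → ∀ a ∈ A, ∀ b ∈ S \ A, Q (insert b (A.erase a)))
    {A T : Finset α} (hAS : A ⊆ S) (hTS : T ⊆ S) (hcard : #A = #T) (hA : Q A) : Q T := by
  induction hk : #(A \ T) generalizing A with
  | zero =>
    rwa [← eq_of_subset_of_card_le (sdiff_eq_empty_iff_subset.1 (card_eq_zero.1 hk)) hcard.ge]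
  | succ k ih =>
    obtain ⟨a, ha⟩ := card_pos.1 (by omega : 0 < #(A \ T))
    obtain ⟨b, hb⟩ := card_pos.1 (by rw [← card_sdiff_comm hcard]; omega : 0 < #(T \ A))
    obtain ⟨haA, haT⟩ := mem_sdiff.1 ha
    obtain ⟨hbT, hbA⟩ := mem_sdiff.1 hb
    refine ih (insert_subset (hTS hbT) ((erase_subset a A).trans hAS)) ?_
      (hQ A hAS hA a haA b (mem_sdiff.2 ⟨hTS hbT, hbA⟩)) ?_
    · rw [card_insert_of_notMem fun h => hbA (mem_of_mem_erase h), card_erase_add_one haA, hcard]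
    · rw [insert_sdiff_of_mem _ hbT, erase_sdiff_comm, card_erase_of_mem ha, hk,
        Nat.add_sub_cancel]

section Orderings

variable [DecidableEq α] [LinearOrder β]

lemma exists_subset_separates (f : α ↪ β) (C : Finset α) {k : ℕ} (hk : k ≤ #C) :
    ∃ U ⊆ C, #U = k ∧ Separates f (U, C \ U) := by
  induction k with
  | zero => exact ⟨∅, empty_subset C, card_empty, by simp [Separates]⟩
  | succ k ih =>
    obtain ⟨U, hUC, hU, hsep⟩ := ih (by omega)
    obtain ⟨m, hm, hmin⟩ := (C \ U).exists_min_image f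
      (card_pos.1 (by rw [card_sdiff_of_subset hUC]; omega))
    obtain ⟨hmC, hmU⟩ := mem_sdiff.1 hm
    refine ⟨insert m U, insert_subset hmC hUC, by rw [card_insert_of_notMem hmU, hU], ?_⟩
    intro a ha b hb
    obtain ⟨hbC, hbmU⟩ := mem_sdiff.1 hb
    obtain ⟨hbm, hbU⟩ := not_or.1 (mem_insert.not.1 hbmU)
    rcases mem_insert.1 ha with rfl | haU
    · exact (hmin b (mem_sdiff.2 ⟨hbC, hbU⟩)).lt_of_ne (f.injective.ne (Ne.symm hbm))
    · exact hsep a haU b (mem_sdiff.2 ⟨hbC, hbU⟩)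

lemma exists_perm_mapsTo {C U V : Finset α} (hU : U ⊆ C) (hV : V ⊆ C) (hcard : #U = #V) :
    ∃ π : Equiv.Perm α, Set.MapsTo π U V ∧ Set.MapsTo π ↑(C \ U) ↑(C \ V) := by
  have hcard' : #(C \ U) = #(C \ V) := by
    rw [card_sdiff_of_subset hU, card_sdiff_of_subset hV, hcard]
  let e₁ := equivOfCardEq hcard
  let e₂ := equivOfCardEq hcard'
  have hinj : Function.Injective (Sum.elim (fun x : U => (x : α)) fun x : ↥(C \ U) => (x : α)) :=
    Subtype.val_injective.sumElim Subtype.val_injective fun x y hxy =>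
      (mem_sdiff.1 y.2).2 (hxy ▸ x.2)
  have hinj' : Function.Injective
      (Sum.elim (fun x : U => (e₁ x : α)) fun x : ↥(C \ U) => (e₂ x : α)) :=
    (Subtype.val_injective.comp e₁.injective).sumElim (Subtype.val_injective.comp e₂.injective)
      fun x y hxy => (mem_sdiff.1 (e₂ y).2).2 (hxy ▸ (e₁ x).2)
  obtain ⟨π, hπ⟩ := Equiv.Perm.exists_extending_pair _ _ hinj hinj'
  exact ⟨π, fun x hx => (hπ (.inl ⟨x, hx⟩)).symm ▸ (e₁ ⟨x, hx⟩).2,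
    fun x hx => mem_coe.2 ((hπ (.inr ⟨x, hx⟩)).symm ▸ (e₂ ⟨x, hx⟩).2)⟩

variable [Fintype α] [Fintype β]

variable (β) in
noncomputable def separators (p : Finset α × Finset α) : Finset (α ↪ β) := {f | Separates f p}

lemma card_separators_le {C U V : Finset α} (hU : U ⊆ C) (hV : V ⊆ C) (hcard : #U = #V) :
    #(separators β (U, C \ U)) ≤ #(separators β (V, C \ V)) := by
  obtain ⟨π, hπV, hπC⟩ := exists_perm_mapsTo hV hU hcard.symm
  refine card_le_card_of_injOn (fun f => π.toEmbedding.trans f) (fun f hf => ?_) fun f _ g _ h => ?_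
  · simp only [separators, coe_filter, mem_univ, true_and, Set.mem_ofPred_eq] at hf ⊢
    exact fun v hv w hw => hf _ (hπV hv) _ (hπC hw)
  · ext x
    simpa using DFunLike.congr_fun h (π.symm x)

lemma card_separators_mul_choose {A B : Finset α} {r : ℕ} (hA : #A = r) (hB : #B = r)
    (hAB : Disjoint A B) : #(separators β (A, B)) * (2 * r).choose r = Fintype.card (α ↪ β) := by
  -- Each ordering separates `(U, C \ U)` for exactly one `r`-subset `U` of `C = A ∪ B`, and a
  -- permutation of `C` carrying one such `U` to another shows that all `U` are equally likely.
  set C := A ∪ B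
  have hC : #C = 2 * r := by rw [card_union_of_disjoint hAB, hA, hB]; ring
  have hcover : (C.powersetCard r).biUnion (fun U => separators β (U, C \ U)) = univ := by
    refine eq_univ_of_forall fun f => ?_
    obtain ⟨U, hUC, hU, hsep⟩ := exists_subset_separates f C (k := r) (by omega)
    exact mem_biUnion.2 ⟨U, mem_powersetCard.2 ⟨hUC, hU⟩, by simpa [separators] using hsep⟩
  have hdisj : (C.powersetCard r : Set (Finset α)).PairwiseDisjoint
      fun U => separators β (U, C \ U) := by
    intro U hU V hV hne
    obtain ⟨hUC, hU⟩ := mem_powersetCard.1 hU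
    obtain ⟨hVC, hV⟩ := mem_powersetCard.1 hV
    refine disjoint_left.2 fun f hfU hfV => ?_
    simp only [separators, mem_filter, mem_univ, true_and] at hfU hfV
    exact hfU.not_separates (not_disjoint_sdiff_of_ne hUC hVC (hU.trans hV.symm) hne)
      (not_disjoint_sdiff_of_ne hVC hUC (hV.trans hU.symm) (Ne.symm hne)) hfV
  have hfiber : ∀ U ∈ C.powersetCard r, #(separators β (U, C \ U)) = #(separators β (A, B)) := by
    intro U hU
    obtain ⟨hUC, hU⟩ := mem_powersetCard.1 hU
    rw [← union_sdiff_cancel_left hAB]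
    exact le_antisymm (card_separators_le hUC subset_union_left (hU.trans hA.symm))
      (card_separators_le subset_union_left hUC (hA.trans hU.symm))
  rw [← card_univ, ← hcover, card_biUnion hdisj, sum_const_nat hfiber, card_powersetCard, hC,
    mul_comm]

end Orderings

namespace IsBollobasSystem

variable {r : ℕ} {P : Finset (Finset α × Finset α)} [Fintype α] [LinearOrder β] [Fintype β]

lemma pairwiseDisjoint_separators (hP : IsBollobasSystem r P) :
    (P : Set (Finset α × Finset α)).PairwiseDisjoint (separators β) := by
  intro p hp q hq hne
  refine disjoint_left.2 fun f hfp hfq => ?_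
  simp only [separators, mem_filter, mem_univ, true_and] at hfp hfq
  exact hfp.not_separates (hP.not_disjoint p hp q hq hne) (hP.not_disjoint q hq p hp hne.symm) hfq

variable [DecidableEq α]

lemma card_biUnion_separators_mul_choose (hP : IsBollobasSystem r P) :
    #(P.biUnion (separators β)) * (2 * r).choose r = #P * Fintype.card (α ↪ β) := by
  rw [card_biUnion hP.pairwiseDisjoint_separators, sum_mul, sum_congr rfl fun p hp =>
    card_separators_mul_choose (hP.card_fst p hp) (hP.card_snd p hp) (hP.disjoint p hp),
    sum_const, smul_eq_mul]

lemma card_le_choose_of_fintype (hP : IsBollobasSystem r P) : #P ≤ (2 * r).choose r := by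
  have hpos : 0 < Fintype.card (α ↪ Fin (Fintype.card α)) :=
    Fintype.card_pos_iff.2 ⟨(Fintype.equivFin α).toEmbedding⟩
  refine Nat.le_of_mul_le_mul_right ?_ hpos
  rw [← hP.card_biUnion_separators_mul_choose, mul_comm]
  exact Nat.mul_le_mul_left _ (card_le_univ _)

lemma exists_separates (hP : IsBollobasSystem r P) (hcard : #P = (2 * r).choose r)
    (f : α ↪ β) : ∃ p ∈ P, Separates f p := by
  have hcover : P.biUnion (separators β) = univ := by
    refine eq_univ_of_card _ (Nat.eq_of_mul_eq_mul_right (Nat.choose_pos (by omega : r ≤ 2 * r)) ?_)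
    rw [hP.card_biUnion_separators_mul_choose, hcard, mul_comm]
  obtain ⟨p, hp, hf⟩ := mem_biUnion.1 (hcover ▸ mem_univ f)
  exact ⟨p, hp, by simpa [separators] using hf⟩

end IsBollobasSystem

section Tiered

variable [Fintype α] {γ : Type*} [LinearOrder γ]

noncomputable def tieredEmbedding (t : α → γ) : α ↪ γ ×ₗ Fin (Fintype.card α) :=
  ⟨fun x => toLex (t x, Fintype.equivFin α x), fun _ _ h =>
    (Fintype.equivFin α).injective (congrArg (fun z => (ofLex z).2) h)⟩

lemma le_of_tieredEmbedding_lt {t : α → γ} {x y : α}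
    (h : tieredEmbedding t x < tieredEmbedding t y) : t x ≤ t y := by
  rcases Prod.Lex.toLex_lt_toLex.1 h with h | ⟨h, -⟩
  exacts [h.le, h.le]

end Tiered

namespace IsBollobasSystem

variable [DecidableEq α] [Fintype α] {r : ℕ} {P : Finset (Finset α × Finset α)}

lemma exists_mem_insert_erase (hP : IsBollobasSystem r P) (hcard : #P = (2 * r).choose r)
    {A B : Finset α} (hAB : (A, B) ∈ P) {a b : α} (ha : a ∈ A) (hb : b ∈ B) :
    ∃ H, (insert b (A.erase a), H) ∈ P := by
  -- The ordering `A \ {a}, b, a, …` separates some pair `(G, H) ≠ (A, B)`. Crosswise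
  -- intersection with `(A, B)` forces `a ∈ H`, so `G` is made of the `r` elements before `a`.
  have hbA : b ∉ A := disjoint_right.1 (hP.disjoint _ hAB) hb
  let t : α → Fin 4 := fun x =>
    if x ∈ A.erase a then 0 else if x = b then 1 else if x = a then 2 else 3
  have hta : t a = 2 := by simp [t, ne_of_mem_of_not_mem ha hbA]
  have htb : t b = 1 := by simp [t, hbA]
  have htA : ∀ x ∈ A, x ≠ a → t x = 0 := fun x hx hxa => by simp [t, hx, hxa]
  have htB : ∀ x ∈ B, 1 ≤ t x := fun x hx => by
    have hxA : x ∉ A := disjoint_right.1 (hP.disjoint _ hAB) hx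
    simp only [t, mem_erase, hxA, and_false, if_false]
    split_ifs <;> decide
  obtain ⟨⟨G, H⟩, hGH, hsep⟩ := hP.exists_separates hcard (tieredEmbedding t)
  have hne : (G, H) ≠ (A, B) := fun h => by
    obtain ⟨rfl, rfl⟩ := Prod.mk.inj h
    have := le_of_tieredEmbedding_lt (hsep a ha b hb)
    rw [hta, htb] at this
    exact absurd this (by decide)
  obtain ⟨g, hgG, hgB⟩ := not_disjoint_iff.1 (hP.not_disjoint _ hGH _ hAB hne)
  obtain ⟨h, hhA, hhH⟩ := not_disjoint_iff.1 (hP.not_disjoint _ hAB _ hGH hne.symm)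
  have haH : a ∈ H := by
    by_contra haH
    have hgh := le_of_tieredEmbedding_lt (hsep g hgG h hhH)
    rw [htA h hhA fun e => haH (e ▸ hhH)] at hgh
    exact absurd ((htB g hgB).trans hgh) (by decide)
  have hGsub : G ⊆ insert b (A.erase a) := fun x hx => by
    have hlt := hsep x hx a haH
    have hxa : x ≠ a := fun e => lt_irrefl _ (e ▸ hlt)
    have hle := le_of_tieredEmbedding_lt hlt
    rw [hta] at hle
    simp only [t, hxa, if_false] at hle
    rw [mem_insert]
    split_ifs at hle with h1 h2
    · exact Or.inr h1
    · exact Or.inl h2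
    · exact absurd hle (by decide)
  refine ⟨H, ?_⟩
  convert hGH
  refine (eq_of_subset_of_card_le hGsub ?_).symm
  rw [card_insert_of_notMem fun h => hbA (mem_of_mem_erase h), card_erase_add_one ha,
    hP.card_fst _ hGH, hP.card_fst _ hAB]

lemma insert_erase_mem (hP : IsBollobasSystem r P) (hswap : ∀ p ∈ P, p.swap ∈ P)
    (hcard : #P = (2 * r).choose r) {S A : Finset α} (hAS : A ⊆ S) (hA : (A, S \ A) ∈ P)
    {a b : α} (ha : a ∈ A) (hb : b ∈ S \ A) :
    (insert b (A.erase a), S \ insert b (A.erase a)) ∈ P := by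
  have hcompl : insert a ((S \ A).erase b) = S \ insert b (A.erase a) := by
    have := hAS ha
    have := ne_of_mem_of_not_mem ha (mem_sdiff.1 hb).2
    ext x
    simp only [mem_insert, mem_erase, mem_sdiff]
    grind
  -- With `A' = insert b (A.erase a)`, exchanging in `(S \ A, A)` as well gives a pair
  -- `(G, S \ A')`, which must be `(A', H)` because `A'` and `S \ A'` are disjoint.
  obtain ⟨H, hH⟩ := hP.exists_mem_insert_erase hcard hA ha hb
  obtain ⟨G, hG⟩ := hP.exists_mem_insert_erase hcard (hswap _ hA) hb ha
  rw [hcompl] at hG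
  have hHG : (insert b (A.erase a), H) = (G, S \ insert b (A.erase a)) :=
    by_contra fun hne => hP.not_disjoint _ hH _ (hswap _ hG) hne disjoint_sdiff
  rwa [(Prod.mk.inj hHG).2] at hH

theorem eq_splits_of_card_eq_of_fintype (hP : IsBollobasSystem r P)
    (hswap : ∀ p ∈ P, p.swap ∈ P) (hcard : #P = (2 * r).choose r) {p : Finset α × Finset α}
    (hp : p ∈ P) : P = splits (p.1 ∪ p.2) r := by
  set S := p.1 ∪ p.2
  have hS : #S = 2 * r := by
    rw [card_union_of_disjoint (hP.disjoint p hp), hP.card_fst p hp, hP.card_snd p hp, two_mul]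
  have hsub : splits S r ⊆ P := fun q hq => by
    obtain ⟨hqS, hq, hq2⟩ := mem_splits.1 hq
    have hp' : (p.1, S \ p.1) ∈ P := by rwa [union_sdiff_cancel_left (hP.disjoint p hp)]
    rw [← Prod.mk.eta (p := q), hq2]
    exact induction_on_exchange (Q := fun A => (A, S \ A) ∈ P)
      (fun A hAS hA a ha b hb => hP.insert_erase_mem hswap hcard hAS hA ha hb)
      subset_union_left hqS (by rw [hP.card_fst p hp, hq]) hp'
  exact (eq_of_subset_of_card_le hsub (by rw [hcard, card_splits, hS])).symm

end IsBollobasSystem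

section Transport

variable {γ : Type*} {r : ℕ}

def pairMap (φ : α ↪ γ) : Finset α × Finset α ↪ Finset γ × Finset γ :=
  (mapEmbedding φ).toEmbedding.prodMap (mapEmbedding φ).toEmbedding

@[simp]
lemma pairMap_apply (φ : α ↪ γ) (p : Finset α × Finset α) :
    pairMap φ p = (p.1.map φ, p.2.map φ) := rfl

variable {φ : α ↪ γ} {P : Finset (Finset α × Finset α)}

lemma IsBollobasSystem.of_map (h : IsBollobasSystem r (P.map (pairMap φ))) :
    IsBollobasSystem r P where
  card_fst p hp := by simpa using h.card_fst _ (mem_map_of_mem _ hp)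
  card_snd p hp := by simpa using h.card_snd _ (mem_map_of_mem _ hp)
  disjoint p hp := by simpa using h.disjoint _ (mem_map_of_mem _ hp)
  not_disjoint p hp q hq hne := by
    simpa using h.not_disjoint _ (mem_map_of_mem _ hp) _ (mem_map_of_mem _ hq)
      ((pairMap φ).injective.ne hne)

lemma swap_mem_of_map (h : ∀ p ∈ P.map (pairMap φ), p.swap ∈ P.map (pairMap φ)) :
    ∀ p ∈ P, p.swap ∈ P := fun _ hp =>
  (mem_map' (pairMap φ)).1 (h _ (mem_map_of_mem _ hp))

variable [DecidableEq α] [DecidableEq γ]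

lemma map_splits (S : Finset α) : (splits S r).map (pairMap φ) = splits (S.map φ) r := by
  rw [splits, splits, powersetCard_map, map_eq_image (pairMap φ), image_image,
    map_eq_image (mapEmbedding φ).toEmbedding, image_image]
  refine image_congr fun T _ => ?_
  simp [Finset.map_sdiff]

lemma exists_map_subtype_eq (P : Finset (Finset α × Finset α)) :
    ∃ (X : Finset α) (P' : Finset (Finset X × Finset X)),
      P'.map (pairMap (Function.Embedding.subtype (· ∈ X))) = P := by
  set X := P.biUnion fun p => p.1 ∪ p.2
  refine ⟨X, P.image fun p => (p.1.subtype (· ∈ X), p.2.subtype (· ∈ X)), ?_⟩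
  rw [map_eq_image, image_image]
  refine (image_congr fun p hp => ?_).trans image_id
  have hX : p.1 ∪ p.2 ⊆ X := subset_biUnion_of_mem (fun p => p.1 ∪ p.2) hp
  simp only [Function.comp_apply, pairMap_apply, id]
  rw [subtype_map_of_mem fun x hx => hX (mem_union_left _ hx),
    subtype_map_of_mem fun x hx => hX (mem_union_right _ hx)]

theorem IsBollobasSystem.card_le_choose (hP : IsBollobasSystem r P) : #P ≤ (2 * r).choose r := by
  obtain ⟨X, P, rfl⟩ := exists_map_subtype_eq P
  rw [card_map]
  exact hP.of_map.card_le_choose_of_fintype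

theorem IsBollobasSystem.eq_splits_of_card_eq (hP : IsBollobasSystem r P)
    (hswap : ∀ p ∈ P, p.swap ∈ P) (hcard : #P = (2 * r).choose r) {p : Finset α × Finset α}
    (hp : p ∈ P) : P = splits (p.1 ∪ p.2) r := by
  obtain ⟨X, P, rfl⟩ := exists_map_subtype_eq P
  obtain ⟨p, hp', rfl⟩ := mem_map.1 hp
  rw [card_map] at hcard
  rw [hP.of_map.eq_splits_of_card_eq_of_fintype (swap_mem_of_map hswap) hcard hp', map_splits,
    map_union, pairMap_apply]

end Transport

section OrientedEdges

variable [DecidableEq α] {M : Finset (Finset α × Finset α)} {p : Finset α × Finset α}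

def orientedEdges (M : Finset (Finset α × Finset α)) : Finset (Finset α × Finset α) :=
  M ∪ M.image Prod.swap

lemma mem_orientedEdges : p ∈ orientedEdges M ↔ p ∈ M ∨ p.swap ∈ M := by
  refine mem_union.trans (or_congr_right ⟨fun h => ?_, fun h => mem_image.2 ⟨_, h, p.swap_swap⟩⟩)
  obtain ⟨e, he, rfl⟩ := mem_image.1 h
  rwa [Prod.swap_swap]

lemma swap_mem_orientedEdges (hp : p ∈ orientedEdges M) : p.swap ∈ orientedEdges M := by
  rw [mem_orientedEdges, Prod.swap_swap] at *
  exact hp.symm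

end OrientedEdges

namespace IsInducedMatching

variable {n r : ℕ} {M : Finset (Finset ℕ × Finset ℕ)}

lemma not_disjoint_self (hM : IsInducedMatching n r M) (hr : 0 < r) {e : Finset ℕ × Finset ℕ}
    (he : e ∈ M) : ¬Disjoint e.1 e.1 ∧ ¬Disjoint e.2 e.2 := by
  simp only [disjoint_self_iff_empty, ← card_eq_zero, (hM.1 e he).1.2, (hM.1 e he).2.1.2]
  omega

lemma isBollobasSystem (hM : IsInducedMatching n r M) (hr : 0 < r) :
    IsBollobasSystem r (orientedEdges M) where
  card_fst p hp := by
    rcases mem_orientedEdges.1 hp with h | h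
    exacts [(hM.1 _ h).1.2, (hM.1 _ h).2.1.2]
  card_snd p hp := by
    rcases mem_orientedEdges.1 hp with h | h
    exacts [(hM.1 _ h).2.1.2, (hM.1 _ h).1.2]
  disjoint p hp := by
    rcases mem_orientedEdges.1 hp with h | h
    exacts [(hM.1 _ h).2.2, (hM.1 _ h).2.2.symm]
  not_disjoint p hp q hq hne := by
    rcases mem_orientedEdges.1 hp with hp | hp <;> rcases mem_orientedEdges.1 hq with hq | hq
    · exact (hM.2 p hp q hq hne).2.2.2.2.2.1
    · by_cases h : p = q.swap
      · exact h ▸ (hM.not_disjoint_self hr hq).1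
      · exact (hM.2 p hp q.swap hq h).2.2.2.2.1
    · by_cases h : p.swap = q
      · exact h ▸ (hM.not_disjoint_self hr hq).2
      · exact (hM.2 p.swap hp q hq h).2.2.2.2.2.2.2
    · exact (hM.2 p.swap hp q.swap hq (Prod.swap_injective.ne hne)).2.2.2.2.2.2.1

lemma card_orientedEdges (hM : IsInducedMatching n r M) (hr : 0 < r) :
    #(orientedEdges M) = 2 * #M := by
  rw [orientedEdges, card_union_of_disjoint, card_image_of_injective _ Prod.swap_injective,
    two_mul]
  refine disjoint_left.2 fun e he he' => ?_
  obtain ⟨e', he'', rfl⟩ := mem_image.1 he'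
  by_cases h : e'.swap = e'
  · exact (hM.not_disjoint_self hr he'').1 (congrArg Prod.fst h ▸ (hM.1 e' he'').2.2)
  · exact (hM.2 _ he _ he'' h).2.1 rfl

end IsInducedMatching

lemma isInducedMatching_of_subset {n r : ℕ} {P M : Finset (Finset ℕ × Finset ℕ)}
    (hP : IsBollobasSystem r P) (hswap : ∀ p ∈ P, p.swap ∈ P)
    (hPn : ∀ p ∈ P, p.1 ⊆ range n ∧ p.2 ⊆ range n) (hMP : M ⊆ P)
    (hM : ∀ e ∈ M, e.swap ∉ M) : IsInducedMatching n r M := by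
  refine ⟨fun e he => ⟨⟨(hPn e (hMP he)).1, hP.card_fst e (hMP he)⟩,
    ⟨(hPn e (hMP he)).2, hP.card_snd e (hMP he)⟩, hP.disjoint e (hMP he)⟩,
    fun e he e' he' hne => ?_⟩
  have key : ∀ p ∈ P, ∀ q ∈ P, p ≠ q → p.1 ≠ q.1 ∧ ¬Disjoint p.1 q.2 := fun p hp q hq hpq =>
    ⟨fun h => hpq (hP.eq_of_fst_eq hp hq h), hP.not_disjoint p hp q hq hpq⟩
  have h₁ := key e (hMP he) e' (hMP he') hne
  have h₂ := key e' (hMP he') e (hMP he) hne.symm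
  have h₃ := key e (hMP he) e'.swap (hswap _ (hMP he')) fun h => hM e' he' (h ▸ he)
  have h₄ := key e.swap (hswap _ (hMP he)) e' (hMP he') fun h => hM e he (h ▸ he')
  have h₅ := key e.swap (hswap _ (hMP he)) e'.swap (hswap _ (hMP he'))
    (Prod.swap_injective.ne hne)
  exact ⟨h₁.1, h₃.1, h₄.1, h₅.1, h₃.2, h₁.2, fun h => h₂.2 h.symm, h₄.2⟩

lemma exists_isInducedMatching_choose_le {n r : ℕ} (hr : 0 < r) (hn : 2 * r ≤ n) :
    ∃ M, IsInducedMatching n r M ∧ (2 * r).choose r ≤ 2 * #M := by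
  set S := range (2 * r)
  have hS : #S = 2 * r := card_range _
  set M := (splits S r).filter (0 ∈ ·.1)
  have hM : ∀ e ∈ M, e.swap ∉ M := fun e he he' => by
    obtain ⟨he, he0⟩ := mem_filter.1 he
    have he0' : 0 ∈ e.2 := (mem_filter.1 he').2
    rw [(mem_splits.1 he).2.2] at he0'
    exact (mem_sdiff.1 he0').2 he0
  have hcover : splits S r ⊆ orientedEdges M := fun p hp => by
    have h0 : 0 ∈ p.1 ∪ p.2 := by
      rw [(mem_splits.1 hp).2.2, union_sdiff_of_subset (mem_splits.1 hp).1]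
      exact mem_range.2 (by omega)
    rw [mem_orientedEdges]
    rcases mem_union.1 h0 with h | h
    exacts [.inl (mem_filter.2 ⟨hp, h⟩), .inr (mem_filter.2 ⟨swap_mem_splits hS hp, h⟩)]
  refine ⟨M, isInducedMatching_of_subset (isBollobasSystem_splits hS)
    (fun _ => swap_mem_splits hS) (fun p hp => ?_) (filter_subset _ _) hM, ?_⟩
  · have hSn : S ⊆ range n := range_subset_range.2 hn
    exact ⟨(subset_of_mem_splits hp).1.trans hSn, (subset_of_mem_splits hp).2.trans hSn⟩
  · calc (2 * r).choose r = #(splits S r) := by rw [card_splits, hS]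
      _ ≤ #M + #(M.image Prod.swap) := (card_le_card hcover).trans (card_union_le _ _)
      _ = 2 * #M := by rw [card_image_of_injective _ Prod.swap_injective, two_mul]

theorem maximum_induced_matching_structure (n r : ℕ) (hr : 2 ≤ r) (hn : 2 * r ≤ n)
    (M : Finset (Finset ℕ × Finset ℕ)) (hM : IsInducedMatching n r M)
    (hmax : ∀ M' : Finset (Finset ℕ × Finset ℕ),
      IsInducedMatching n r M' → M'.card ≤ M.card) :
    M.card = (2 * r).choose r / 2 ∧
    ∃ S ⊆ Finset.range n, S.card = 2 * r ∧
      (∀ e ∈ M, e.1 ⊆ S ∧ e.2 ⊆ S) ∧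
      (∀ T ⊆ S, T.card = r → ∃ e ∈ M, e.1 = T ∨ e.2 = T) := by
  have hr₀ : 0 < r := by omega
  have hP := hM.isBollobasSystem hr₀
  have hPM := hM.card_orientedEdges hr₀
  obtain ⟨M₀, hM₀, hM₀card⟩ := exists_isInducedMatching_choose_le hr₀ hn
  have hcard : #(orientedEdges M) = (2 * r).choose r :=
    le_antisymm hP.card_le_choose (by have := hmax M₀ hM₀; omega)
  obtain ⟨e, he⟩ : M.Nonempty := card_pos.1 (by
    have := Nat.choose_pos (by omega : r ≤ 2 * r); omega)
  have hsplits := hP.eq_splits_of_card_eq (fun _ => swap_mem_orientedEdges) hcard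
    (mem_union_left _ he)
  obtain ⟨⟨he₁, -⟩, ⟨he₂, -⟩, hdisj⟩ := hM.1 e he
  refine ⟨by omega, e.1 ∪ e.2, union_subset he₁ he₂, ?_, fun e' he' => ?_, fun T hTS hT => ?_⟩
  · rw [card_union_of_disjoint hdisj, hP.card_fst e (mem_union_left _ he),
      hP.card_snd e (mem_union_left _ he), two_mul]
  · exact subset_of_mem_splits (hsplits ▸ mem_union_left _ he' : e' ∈ splits _ r)
  · have hT : (T, (e.1 ∪ e.2) \ T) ∈ orientedEdges M := hsplits ▸ mem_splits.2 ⟨hTS, hT, rfl⟩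
    rcases mem_orientedEdges.1 hT with h | h
    exacts [⟨_, h, .inl rfl⟩, ⟨_, h, .inr rfl⟩]
end

section
/- For every r ≥ 2 and every s, t ≥ 2r and every n, there exists a red/blue edge-coloring of KG(n,r) containing no monochromatic induced copy of KG(s,r) and no monochromatic induced copy of KG(t,r). In particular the induced r-Kneser Ramsey number does not exist. -/
/-- The edge-coloring `c` of `KG(n,r)` contains a monochromatic (color `b`)
induced copy of `KG(m,r)`: all edges between `r`-subsets of some `m`-element
subset `S` of `[n]` have color `b`. -/
def HasMonoInducedKG (n r : ℕ) (c : Finset ℕ → Finset ℕ → Bool) (b : Bool) (m : ℕ) : Prop :=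
  ∃ S ⊆ Finset.range n, S.card = m ∧
    ∀ A B : Finset ℕ, A ⊆ S → B ⊆ S → A.card = r → B.card = r → Disjoint A B → c A B = b

/-- Color an edge by whether min and max of `A ∪ B` lie in the same part. -/
def col (A B : Finset ℕ) : Bool :=
  if h : (A ∪ B).Nonempty then
    decide (((A ∪ B).min' h ∈ A ↔ (A ∪ B).max' h ∈ A) ∧
            ((A ∪ B).min' h ∈ B ↔ (A ∪ B).max' h ∈ B))
  else true

lemma col_symm (A B : Finset ℕ) : col A B = col B A := by
  unfold col
  rw [Finset.union_comm B A]
  by_cases h : (A ∪ B).Nonempty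
  · rw [dif_pos h, dif_pos h, decide_eq_decide]
    exact and_comm
  · rw [dif_neg h, dif_neg h]

lemma col_spec (A B T : Finset ℕ) (hU : A ∪ B = T) (hT : T.Nonempty) :
    col A B = decide ((T.min' hT ∈ A ↔ T.max' hT ∈ A) ∧
      (T.min' hT ∈ B ↔ T.max' hT ∈ B)) := by
  subst hU
  simp only [col, dif_pos hT]

lemma key (n r m : ℕ) (hr : 2 ≤ r) (hm : 2 * r ≤ m) (b : Bool) :
    ¬ HasMonoInducedKG n r col b m := by
  rintro ⟨S, hSn, hScard, hmono⟩
  obtain ⟨T, hTS, hTcard⟩ := Finset.exists_subset_card_eq (show 2 * r ≤ S.card by omega)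
  have hT1 : 1 < T.card := by omega
  have hTne : T.Nonempty := Finset.card_pos.mp (by omega)
  set x := T.min' hTne with hx
  set y := T.max' hTne with hy
  have hxT : x ∈ T := T.min'_mem hTne
  have hyT : y ∈ T := T.max'_mem hTne
  have hxy : x ≠ y := ne_of_lt (T.min'_lt_max'_of_card hT1)
  have hy' : y ∈ T.erase x := Finset.mem_erase.mpr ⟨hxy.symm, hyT⟩
  have hcard'' : ((T.erase x).erase y).card = 2 * r - 2 := by
    rw [Finset.card_erase_of_mem hy', Finset.card_erase_of_mem hxT, hTcard]; omega
  have hTsub : (T.erase x).erase y ⊆ T :=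
    (Finset.erase_subset _ _).trans (Finset.erase_subset _ _)
  -- main computation: for A ⊆ T containing x with card r, col A (T\A) = decide (y ∈ A)
  have main : ∀ A, A ⊆ T → A.card = r → x ∈ A → col A (T \ A) = decide (y ∈ A) := by
    intro A hA hAcard hxA
    have hU : A ∪ (T \ A) = T := Finset.union_sdiff_of_subset hA
    have hxB : x ∉ T \ A := fun hh => (Finset.mem_sdiff.mp hh).2 hxA
    rw [col_spec A (T \ A) T hU hTne, decide_eq_decide]
    constructor
    · rintro ⟨h1, _⟩; exact h1.mp hxA
    · intro hyA
      have hyB : y ∉ T \ A := fun hh => (Finset.mem_sdiff.mp hh).2 hyA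
      exact ⟨⟨fun _ => hyA, fun _ => hxA⟩, ⟨fun h => absurd h hxB, fun h => absurd h hyB⟩⟩
  -- a set avoiding y
  obtain ⟨C1, hC1sub, hC1card⟩ :=
    Finset.exists_subset_card_eq (show r - 1 ≤ ((T.erase x).erase y).card by omega)
  obtain ⟨C2, hC2sub, hC2card⟩ :=
    Finset.exists_subset_card_eq (show r - 2 ≤ ((T.erase x).erase y).card by omega)
  have hxC1 : x ∉ C1 := fun h => (Finset.mem_erase.mp ((Finset.erase_subset _ _) (hC1sub h))).1 rfl
  have hyC1 : y ∉ C1 := fun h => (Finset.mem_erase.mp (hC1sub h)).1 rfl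
  have hxC2 : x ∉ C2 := fun h => (Finset.mem_erase.mp ((Finset.erase_subset _ _) (hC2sub h))).1 rfl
  have hyC2 : y ∉ C2 := fun h => (Finset.mem_erase.mp (hC2sub h)).1 rfl
  -- A_out: contains x, not y
  set Aout := insert x C1 with hAout
  have hAoutT : Aout ⊆ T := Finset.insert_subset hxT ((hC1sub).trans hTsub)
  have hAoutcard : Aout.card = r := by
    rw [hAout, Finset.card_insert_of_notMem hxC1, hC1card]; omega
  have hyAout : y ∉ Aout := by
    simp only [hAout, Finset.mem_insert]
    rintro (h | h)
    · exact hxy h.symm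
    · exact hyC1 h
  -- A_in: contains x and y
  set Ain := insert x (insert y C2) with hAin
  have hxyC2 : x ∉ insert y C2 := by
    simp only [Finset.mem_insert]
    rintro (h | h)
    · exact hxy h
    · exact hxC2 h
  have hAinT : Ain ⊆ T :=
    Finset.insert_subset hxT (Finset.insert_subset hyT ((hC2sub).trans hTsub))
  have hAincard : Ain.card = r := by
    rw [hAin, Finset.card_insert_of_notMem hxyC2, Finset.card_insert_of_notMem hyC2, hC2card]
    omega
  have hyAin : y ∈ Ain := Finset.mem_insert_of_mem (Finset.mem_insert_self _ _)
  -- apply hmono to both edges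
  have edge : ∀ A, A ⊆ T → A.card = r → col A (T \ A) = b := by
    intro A hA hAcard
    refine hmono A (T \ A) (hA.trans hTS) (((Finset.sdiff_subset)).trans hTS) hAcard ?_
      Finset.disjoint_sdiff
    rw [Finset.card_sdiff_of_subset hA, hTcard, hAcard]; omega
  have e1 := edge Aout hAoutT hAoutcard
  have e2 := edge Ain hAinT hAincard
  rw [main Aout hAoutT hAoutcard (Finset.mem_insert_self _ _)] at e1
  rw [main Ain hAinT hAincard (Finset.mem_insert_self _ _)] at e2
  simp only [hyAout, hyAin, decide_eq_true_eq, decide_eq_false_iff_not] at e1 e2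
  rw [← e2] at e1
  simp at e1

theorem no_induced_kneser_ramsey (r s t n : ℕ) (hr : 2 ≤ r) (hs : 2 * r ≤ s) (ht : 2 * r ≤ t) :
    ∃ c : Finset ℕ → Finset ℕ → Bool, (∀ A B, c A B = c B A) ∧
      (∀ b : Bool, ¬ HasMonoInducedKG n r c b s) ∧
      (∀ b : Bool, ¬ HasMonoInducedKG n r c b t) :=
  ⟨col, col_symm, fun b => key n r s hr hs b, fun b => key n r t hr ht b⟩
end

section
/- Let r ≥ 2 and n = R_r(3r,3r) - 1, where R_r(s,t) is the r-uniform hypergraph Ramsey number. Then there exists a red/blue edge-coloring of KG(n,r) containing no red induced copy of KG(3r,r) and no blue triangle. -/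
/-- `N` is Ramsey for the complete `r`-uniform hypergraph: every red/blue
coloring of the `r`-subsets of `[N]` yields a red `s`-clique or a blue `t`-clique. -/
def HypRamseyProp (N r s t : ℕ) : Prop :=
  ∀ c : Finset ℕ → Bool,
    (∃ S ⊆ Finset.range N, S.card = s ∧ ∀ e ⊆ S, e.card = r → c e = true) ∨
    (∃ S ⊆ Finset.range N, S.card = t ∧ ∀ e ⊆ S, e.card = r → c e = false)

/-- The `r`-uniform hypergraph Ramsey number `R_r(s,t)`. -/
noncomputable def hypRamseyNumber (r s t : ℕ) : ℕ := sInf {N | HypRamseyProp N r s t}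

theorem palvolgyi_lower_bound (r : ℕ) (hr : 2 ≤ r) (n : ℕ)
    (hn : n = hypRamseyNumber r (3 * r) (3 * r) - 1) :
    ∃ c : Finset ℕ → Finset ℕ → Bool, (∀ A B, c A B = c B A) ∧
      (¬ ∃ S ⊆ Finset.range n, S.card = 3 * r ∧
        ∀ A B : Finset ℕ, A ⊆ S → B ⊆ S → A.card = r → B.card = r →
          Disjoint A B → c A B = true) ∧
      (¬ ∃ A B C : Finset ℕ,
        (A ⊆ Finset.range n ∧ A.card = r) ∧ (B ⊆ Finset.range n ∧ B.card = r) ∧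
        (C ⊆ Finset.range n ∧ C.card = r) ∧
        Disjoint A B ∧ Disjoint A C ∧ Disjoint B C ∧
        c A B = false ∧ c A C = false ∧ c B C = false) := by
  -- Step 1: n is not Ramsey.
  have hnot : ¬ HypRamseyProp n r (3 * r) (3 * r) := by
    intro h
    have hmem : n ∈ {N | HypRamseyProp N r (3 * r) (3 * r)} := h
    have hle : hypRamseyNumber r (3 * r) (3 * r) ≤ n := Nat.sInf_le hmem
    have hn0 : n = 0 := by omega
    subst hn0
    rcases h (fun _ => true) with ⟨S, hS, hScard, -⟩ | ⟨S, hS, hScard, -⟩ <;>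
    · simp only [Finset.range_zero, Finset.subset_empty] at hS
      subst hS
      simp at hScard
      omega
  -- Step 2: extract a coloring with no monochromatic 3r-clique.
  unfold HypRamseyProp at hnot
  push_neg at hnot
  obtain ⟨c₀, hred, hblue⟩ := hnot
  -- The construction: red iff same c₀-class.
  refine ⟨fun A B => c₀ A == c₀ B, ?_, ?_, ?_⟩
  · intro A B
    simp only [Bool.beq_comm]
  · rintro ⟨S, hS, hScard, hr3⟩
    -- any two r-subsets of S get equal c₀-values
    have key : ∀ A ⊆ S, ∀ B ⊆ S, A.card = r → B.card = r → c₀ A = c₀ B := by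
      intro A hA B hB hAcard hBcard
      have hcard : r ≤ (S \ (A ∪ B)).card := by
        have h1 : (A ∪ B).card ≤ 2 * r := by
          have := Finset.card_union_le A B
          omega
        have h2 : (S \ (A ∪ B)).card ≥ S.card - (A ∪ B).card :=
          Finset.le_card_sdiff _ _
        omega
      obtain ⟨C, hCsub, hCcard⟩ := Finset.exists_subset_card_eq hcard
      have hCS : C ⊆ S := hCsub.trans (Finset.sdiff_subset)
      have hCA : Disjoint A C := by
        refine Finset.disjoint_left.mpr fun x hxA hxC => ?_
        have := hCsub hxC
        simp [Finset.mem_sdiff] at this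
        exact this.2.1 hxA
      have hCB : Disjoint B C := by
        refine Finset.disjoint_left.mpr fun x hxB hxC => ?_
        have := hCsub hxC
        simp [Finset.mem_sdiff] at this
        exact this.2.2 hxB
      have h1 := hr3 A C hA hCS hAcard hCcard hCA
      have h2 := hr3 B C hB hCS hBcard hCcard hCB
      simp only [beq_iff_eq] at h1 h2
      rw [h1, h2]
    -- pick one r-subset
    have hrS : r ≤ S.card := by omega
    obtain ⟨A₀, hA₀sub, hA₀card⟩ := Finset.exists_subset_card_eq hrS
    cases hv : c₀ A₀ with
    | true =>
      obtain ⟨e, he, hecard, hne⟩ := hred S hS hScard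
      exact hne ((key e he A₀ hA₀sub hecard hA₀card).trans hv)
    | false =>
      obtain ⟨e, he, hecard, hne⟩ := hblue S hS hScard
      exact hne ((key e he A₀ hA₀sub hecard hA₀card).trans hv)
  · rintro ⟨A, B, C, -, -, -, -, -, -, h1, h2, h3⟩
    simp only [beq_eq_false_iff_ne, ne_eq] at h1 h2 h3
    cases hA : c₀ A <;> cases hB : c₀ B <;> cases hC : c₀ C <;> simp_all
end
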